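/- arXiv:1704.05872 — 13 statements merged into one kernel-verified Lean document; each statement's English description precedes it below -/
import Mathlib

section
/- Let p be a prime and n ≥ 0 with standard base-p representation n_ℓ ⋯ n_1 n_0. Then the number of integers m with 0 ≤ m ≤ n such that p does not divide C(n, m) equals (n_0 + 1)(n_1 + 1)⋯(n_ℓ + 1). -/
/-! By Lucas' theorem, `p ∤ C(n, m)` iff `m % p ≤ n % p` and `p ∤ C(n / p, m / p)`. Hence
`m ↦ (m % p, m / p)` matches the `m` counted for `n` with pairs of a digit `≤ n₀` and an `m'`
counted for `n / p`, so the count for `n` is `(n₀ + 1)` times the count for `n / p`; induct on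
the number of digits. -/

open Finset

theorem Nat.Prime.not_dvd_choose_of_lt_iff {p r a : ℕ} (hp : p.Prime) (hr : r < p) :
    ¬ p ∣ r.choose a ↔ a ≤ r := by
  refine ⟨fun h => ?_, fun h => (hp.coprime_iff_not_dvd).mp (hp.coprime_choose_of_lt hr h)⟩
  by_contra! hra
  exact h (by rw [Nat.choose_eq_zero_of_lt hra]; exact dvd_zero p)

theorem Nat.Prime.not_dvd_choose_iff {p : ℕ} (hp : p.Prime) (n m : ℕ) :
    ¬ p ∣ n.choose m ↔ m % p ≤ n % p ∧ ¬ p ∣ (n / p).choose (m / p) := by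
  have : Fact p.Prime := ⟨hp⟩
  rw [(Choose.choose_modEq_choose_mod_mul_choose_div_nat (n := n) (k := m)).dvd_iff dvd_rfl,
    hp.dvd_mul, not_or, hp.not_dvd_choose_of_lt_iff (Nat.mod_lt n hp.pos)]

theorem Nat.Prime.card_filter_not_dvd_choose {p : ℕ} (hp : p.Prime) (n : ℕ) :
    #{m ∈ range (n + 1) | ¬ p ∣ n.choose m} =
      (n % p + 1) * #{m ∈ range (n / p + 1) | ¬ p ∣ (n / p).choose m} := by
  rw [← card_range (n % p + 1), ← card_product]
  have hmod {a : ℕ} (b : ℕ) (ha : a < p) : (a + p * b) % p = a := by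
    rw [Nat.add_mul_mod_self_left, Nat.mod_eq_of_lt ha]
  have hdiv {a : ℕ} (b : ℕ) (ha : a < p) : (a + p * b) / p = b := by
    rw [Nat.add_mul_div_left _ _ hp.pos, Nat.div_eq_of_lt ha, zero_add]
  refine card_nbij' (fun m => (m % p, m / p)) (fun x => x.1 + p * x.2) ?_ ?_ ?_ ?_
  · intro m hm
    simp only [mem_coe, mem_filter, mem_product, mem_range, Nat.lt_succ_iff] at hm ⊢
    rw [hp.not_dvd_choose_iff] at hm
    exact ⟨hm.2.1, Nat.div_le_div_right hm.1, hm.2.2⟩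
  · rintro ⟨a, b⟩ hab
    simp only [mem_coe, mem_filter, mem_product, mem_range, Nat.lt_succ_iff] at hab ⊢
    have ha : a < p := hab.1.trans_lt (Nat.mod_lt n hp.pos)
    rw [hp.not_dvd_choose_iff, hmod b ha, hdiv b ha]
    refine ⟨?_, hab.1, hab.2.2⟩
    calc a + p * b ≤ n % p + p * (n / p) := by gcongr; exacts [hab.1, hab.2.1]
      _ = n := Nat.mod_add_div n p
  · intro m _
    exact Nat.mod_add_div m p
  · rintro ⟨a, b⟩ hab
    simp only [mem_coe, mem_product, mem_range] at hab
    have ha : a < p := (Nat.lt_succ_iff.mp hab.1).trans_lt (Nat.mod_lt n hp.pos)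
    exact Prod.ext (hmod b ha) (hdiv b ha)

theorem fine_theorem (p : ℕ) (hp : p.Prime) (n : ℕ) :
    ((Finset.range (n + 1)).filter fun m => ¬ p ∣ n.choose m).card =
      ((Nat.digits p n).map (· + 1)).prod := by
  induction n using Nat.strong_induction_on with
  | _ n ih =>
    rcases Nat.eq_zero_or_pos n with rfl | hn
    · simp [filter_singleton, hp.ne_one]
    rw [hp.card_filter_not_dvd_choose, ih (n / p) (Nat.div_lt_self hn hp.one_lt),
      Nat.digits_def' hp.one_lt hn, List.map_cons, List.prod_cons]
end

section
/- Let p be a prime, n ≥ 0, and d ∈ {0, 1, …, p−1}. Define F_p(n) as the number of m with 0 ≤ m ≤ n such that p does not divide C(n,m). Then F_p(p·n + d) = (d + 1)·F_p(n). -/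
/-!
By Lucas's theorem, `C(p n + d, m) ≡ C(d, m % p) * C(n, m / p) [MOD p]`, and for `d < p` the
factor `C(d, r)` with `r < p` is a unit mod `p` exactly when `r ≤ d`. So `m` is counted on the
left iff `m % p ≤ d` and `m / p` is counted for `n`; writing `m = p k + r` splits these `m` into
`d + 1` choices of `r` times the admissible `k`.
-/

open Finset

theorem Nat.Prime.dvd_choose_iff_lt {p a b : ℕ} (hp : p.Prime) (hb : b < p) :
    p ∣ b.choose a ↔ b < a := by
  refine ⟨fun h => ?_, fun h => Nat.choose_eq_zero_of_lt h ▸ dvd_zero p⟩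
  by_contra! hab
  exact (hp.coprime_iff_not_dvd.1 (hp.coprime_choose_of_lt hb hab)) h

theorem Nat.Prime.dvd_choose_mul_add_iff {p n d : ℕ} (hp : p.Prime) (hd : d < p) (m : ℕ) :
    p ∣ (p * n + d).choose m ↔ d < m % p ∨ p ∣ n.choose (m / p) := by
  have := Fact.mk hp
  have lucas :=
    Choose.choose_modEq_choose_mod_mul_choose_div_nat (p := p) (n := p * n + d) (k := m)
  rw [Nat.mul_add_mod, Nat.mod_eq_of_lt hd, Nat.mul_add_div hp.pos, Nat.div_eq_of_lt hd,
    add_zero] at lucas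
  rw [lucas.dvd_iff dvd_rfl, hp.dvd_mul, hp.dvd_choose_iff_lt hd]

theorem card_filter_mod_le_and_div_mem {p d n : ℕ} (hd : d < p) {S : Finset ℕ}
    (hS : S ⊆ range (n + 1)) :
    #{m ∈ range (p * n + d + 1) | m % p ≤ d ∧ m / p ∈ S} = (d + 1) * #S := by
  rw [← card_range (d + 1), ← card_product]
  have hp : 0 < p := by omega
  have mod_eq {r k : ℕ} (hr : r ≤ d) : (p * k + r) % p = r := by
    rw [Nat.mul_add_mod, Nat.mod_eq_of_lt (by omega)]
  have div_eq {r k : ℕ} (hr : r ≤ d) : (p * k + r) / p = k := by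
    rw [Nat.mul_add_div hp, Nat.div_eq_of_lt (by omega), add_zero]
  refine card_nbij' (fun m => (m % p, m / p)) (fun x => p * x.2 + x.1) ?_ ?_ ?_ ?_
  · intro m hm
    simp only [coe_filter, mem_range, Set.mem_ofPred_eq] at hm
    simp only [coe_product, coe_range, Set.mem_prod, Set.mem_Iio]
    exact ⟨by omega, hm.2.2⟩
  · rintro ⟨r, k⟩ hx
    simp only [coe_product, coe_range, Set.mem_prod, Set.mem_Iio] at hx
    have hk := mem_range.1 (hS hx.2)
    have hr := Nat.lt_succ_iff.1 hx.1
    simp only [coe_filter, mem_range, Set.mem_ofPred_eq, mod_eq hr, div_eq hr]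
    refine ⟨?_, by omega, hx.2⟩
    nlinarith
  · intro m _
    exact Nat.div_add_mod m p
  · rintro ⟨r, k⟩ hx
    simp only [coe_product, coe_range, Set.mem_prod, Set.mem_Iio] at hx
    simp [mod_eq (Nat.lt_succ_iff.1 hx.1), div_eq (Nat.lt_succ_iff.1 hx.1)]

theorem fine_recurrence (p : ℕ) (hp : p.Prime) (n d : ℕ) (hd : d < p) :
    ((Finset.range (p * n + d + 1)).filter fun m => ¬ p ∣ (p * n + d).choose m).card =
      (d + 1) * ((Finset.range (n + 1)).filter fun m => ¬ p ∣ n.choose m).card := by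
  rw [← card_filter_mod_le_and_div_mem hd (filter_subset _ _)]
  refine congrArg card (filter_congr fun m _ => ?_)
  have lt_succ_of_not_dvd_choose (k : ℕ) (h : ¬ p ∣ n.choose k) : k < n + 1 :=
    Nat.lt_succ_of_le (by_contra fun hk => h (Nat.choose_eq_zero_of_lt (not_le.1 hk) ▸ dvd_zero p))
  simp only [hp.dvd_choose_mul_add_iff hd, mem_filter, mem_range, not_or, not_lt]
  exact and_congr_right fun _ => ⟨fun h => ⟨lt_succ_of_not_dvd_choose _ h, h⟩, And.right⟩
end

section
/- Let p be a prime, n ≥ 1, d ∈ {0,…,p−1}, and let m be an integer with 0 ≤ m ≤ p·n + d such that (m mod p) ≤ d. Then ν_p(C(p·n + d, m)) = ν_p(C(n, ⌊m/p⌋)). -/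
/-!
Write `m = p q + r` with `r = m % p ≤ d`, so that `p n + d - m = p (n - q) + (d - r)` and both
`r` and `d - r` are less than `p`. By Legendre, `ν_p((p k + s)!) = ν_p(k!) + k` whenever `s < p`.
Applying this to the three factorials in `C(p n + d, m) = (p n + d)! / (m! (p n + d - m)!)`, the
linear terms `n`, `q`, `n - q` cancel and what remains is `ν_p(n!) - ν_p(q!) - ν_p((n - q)!)`.
-/

open Nat

namespace padicValNat

variable {p : ℕ} [Fact p.Prime]

theorem add_choose_add_factorial_add_factorial (i j : ℕ) :
    padicValNat p ((i + j).choose j) + padicValNat p i ! + padicValNat p j ! =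
      padicValNat p (i + j)! := by
  rw [← add_choose_mul_factorial_mul_factorial i j,
    padicValNat.mul (mul_ne_zero (choose_pos (le_add_left j i)).ne' (factorial_ne_zero i))
      (factorial_ne_zero j),
    padicValNat.mul (choose_pos (le_add_left j i)).ne' (factorial_ne_zero i)]

theorem factorial_mul_add_of_lt {s : ℕ} (k : ℕ) (hs : s < p) :
    padicValNat p (p * k + s)! = padicValNat p k ! + k := by
  rw [padicValNat_factorial_mul_add k hs, padicValNat_factorial_mul]

theorem choose_mul_add_of_add_lt {r s : ℕ} (a b : ℕ) (hrs : r + s < p) :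
    padicValNat p ((p * (a + b) + (r + s)).choose (p * b + s)) =
      padicValNat p ((a + b).choose b) := by
  have hsplit : p * (a + b) + (r + s) = (p * a + r) + (p * b + s) := by ring
  have hbig := add_choose_add_factorial_add_factorial (p := p) (p * a + r) (p * b + s)
  have hsmall := add_choose_add_factorial_add_factorial (p := p) a b
  rw [← hsplit, factorial_mul_add_of_lt _ hrs, factorial_mul_add_of_lt _ (by omega : r < p),
    factorial_mul_add_of_lt _ (by omega : s < p)] at hbig
  omega

end padicValNat

theorem valuation_no_carry_general (p : ℕ) (hp : p.Prime) (n d m : ℕ) (hd : d < p)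
    (hm : m ≤ p * n + d) (hmd : m % p ≤ d) :
    padicValNat p ((p * n + d).choose m) = padicValNat p (n.choose (m / p)) := by
  have : Fact p.Prime := ⟨hp⟩
  have hm_eq : m = p * (m / p) + m % p := (Nat.div_add_mod m p).symm
  have hq : m / p ≤ n := by
    by_contra! h
    have := Nat.mul_le_mul_left p (succ_le_of_lt h)
    rw [Nat.mul_succ] at this
    omega
  have hn_eq : n = (n - m / p) + m / p := (Nat.sub_add_cancel hq).symm
  have hd_eq : d = (d - m % p) + m % p := (Nat.sub_add_cancel hmd).symm
  have key := padicValNat.choose_mul_add_of_add_lt (p := p) (n - m / p) (m / p)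
    (r := d - m % p) (s := m % p) (by omega)
  rwa [← hm_eq, ← hn_eq, ← hd_eq] at key

theorem valuation_no_carry (p : ℕ) (hp : p.Prime) (n d m : ℕ) (hn : 1 ≤ n) (hd : d < p)
    (hm : m ≤ p * n + d) (hmd : m % p ≤ d) :
    padicValNat p ((p * n + d).choose m) = padicValNat p (n.choose (m / p)) :=
  valuation_no_carry_general p hp n d m hd hm hmd
end

section
/- Let p be a prime, n ≥ 1, d ∈ {0,…,p−1}, and let m be an integer with 0 ≤ m ≤ p·n + d such that (m mod p) > d. Then ν_p(C(p·n + d, m)) = ν_p(n) + ν_p(C(n − 1, ⌊m/p⌋)) + 1. -/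
open Nat

private lemma fact_val (p : ℕ) [Fact p.Prime] (k e : ℕ) (he : e < p) :
    padicValNat p (p * k + e) ! = padicValNat p k ! + k := by
  rw [padicValNat_factorial_mul_add k he, padicValNat_factorial_mul]

private lemma choose_val (p : ℕ) [Fact p.Prime] {a b : ℕ} (h : b ≤ a) :
    padicValNat p (a.choose b) + padicValNat p b ! + padicValNat p (a - b) ! =
      padicValNat p a ! := by
  have key := Nat.choose_mul_factorial_mul_factorial h
  have h1 : a.choose b ≠ 0 := (Nat.choose_pos h).ne'
  have h2 : b ! ≠ 0 := Nat.factorial_ne_zero b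
  have h3 : (a - b) ! ≠ 0 := Nat.factorial_ne_zero _
  calc padicValNat p (a.choose b) + padicValNat p b ! + padicValNat p (a - b) !
      = padicValNat p (a.choose b * b ! * (a - b) !) := by
        rw [padicValNat.mul (Nat.mul_ne_zero h1 h2) h3, padicValNat.mul h1 h2]
    _ = padicValNat p a ! := by rw [key]

theorem valuation_carry (p : ℕ) (hp : p.Prime) (n d m : ℕ) (hn : 1 ≤ n) (hd : d < p)
    (hm : m ≤ p * n + d) (hmd : d < m % p) :
    padicValNat p ((p * n + d).choose m) =
      padicValNat p n + padicValNat p ((n - 1).choose (m / p)) + 1 := by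
  haveI : Fact p.Prime := ⟨hp⟩
  set q := m / p with hq
  set r := m % p with hr
  have hp0 : 0 < p := hp.pos
  have hrp : r < p := Nat.mod_lt m hp0
  have hmqr : m = p * q + r := (Nat.div_add_mod m p).symm ▸ by omega
  -- q ≤ n - 1
  have hqn : q + 1 ≤ n := by nlinarith [hmqr, hm, hmd]
  -- the complement
  have hb : p * n + d - m = p * (n - 1 - q) + (p + d - r) := by
    have e1 : p * (n - 1 - q) = p * n - p * q - p := by
      rw [Nat.mul_sub, Nat.mul_sub, Nat.mul_one]; omega
    have e2 : p * q + p ≤ p * n := by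
      calc p * q + p = p * (q + 1) := by ring
        _ ≤ p * n := Nat.mul_le_mul_left p hqn
    omega
  have hbound : p + d - r < p := by omega
  -- valuations of factorials
  have v1 : padicValNat p (p * n + d) ! = padicValNat p n ! + n := fact_val p n d hd
  have v2 : padicValNat p m ! = padicValNat p q ! + q := by
    rw [hmqr]; exact fact_val p q r hrp
  have v3 : padicValNat p (p * n + d - m) ! = padicValNat p (n - 1 - q) ! + (n - 1 - q) := by
    rw [hb]; exact fact_val p (n - 1 - q) (p + d - r) hbound
  -- n! = n * (n-1) !
  have v4 : padicValNat p n ! = padicValNat p n + padicValNat p (n - 1) ! := by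
    have : n ! = n * (n - 1) ! := by
      conv_lhs => rw [show n = (n - 1) + 1 by omega, Nat.factorial_succ,
        show (n - 1) + 1 = n by omega]
    rw [this, padicValNat.mul (by omega) (Nat.factorial_ne_zero _)]
  have v5 := choose_val p (show q ≤ n - 1 by omega)
  have v6 := choose_val p (show m ≤ p * n + d from hm)
  omega
end

section
/- Let p be a prime and define the polynomial T_p(n, x) = Σ_{m=0}^{n} x^{ν_p(C(n,m))}. For n ≥ 1 and d ∈ {0,…,p−1}, T_p(p·n + d, x) = (d + 1)·T_p(n, x) + (p − d − 1)·x^{ν_p(n)+1}·T_p(n − 1, x). -/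
open Polynomial

/-- `T p n` is the polynomial `∑_{m=0}^{n} x^{ν_p(C(n,m))}`. -/
noncomputable def T (p n : ℕ) : Polynomial ℤ :=
  ∑ m ∈ Finset.range (n + 1), X ^ padicValNat p (n.choose m)

/-! Write `0 ≤ i ≤ pn + d` as `i = pm + e` with `e < p`. By Legendre's formula
`ν_p(C(pn+d, pm+e))` equals `ν_p(C(n,m))` when `e ≤ d` (no borrow in the last base-`p` digit),
and `ν_p(n) + 1 + ν_p(C(n-1,m))` when `e > d` (one borrow).
So each full block `m < n` contributes `d + 1` terms of the first kind and `p - d - 1` of the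
second, and the final partial block `m = n` contributes `d + 1` terms equal to `1`. -/

open Finset Nat

theorem Finset.sum_range_mul_eq_sum_sum_range {M : Type*} [AddCommMonoid M] (f : ℕ → M)
    (p a : ℕ) :
    ∑ i ∈ range (p * a), f i = ∑ m ∈ range a, ∑ e ∈ range p, f (p * m + e) := by
  induction a with
  | zero => simp
  | succ a ih => rw [Nat.mul_succ, sum_range_add, ih, sum_range_succ]

section Valuation

variable {p : ℕ} [Fact p.Prime]

theorem padicValNat_factorial_mul_add_of_lt (a : ℕ) {r : ℕ} (hr : r < p) :
    padicValNat p (p * a + r)! = padicValNat p a ! + a := by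
  rw [padicValNat_factorial_mul_add a hr, padicValNat_factorial_mul]

theorem padicValNat_factorial_eq_choose_add {n k : ℕ} (h : k ≤ n) :
    padicValNat p n ! =
      padicValNat p (n.choose k) + padicValNat p k ! + padicValNat p (n - k)! := by
  rw [← choose_mul_factorial_mul_factorial h,
    padicValNat.mul (mul_ne_zero (choose_pos h).ne' (factorial_ne_zero k)) (factorial_ne_zero _),
    padicValNat.mul (choose_pos h).ne' (factorial_ne_zero k)]

theorem padicValNat_choose_mul_add_of_le {a b r s : ℕ} (hr : r < p) (hs : s ≤ r) (hb : b ≤ a) :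
    padicValNat p ((p * a + r).choose (p * b + s)) = padicValNat p (a.choose b) := by
  obtain ⟨c, rfl⟩ := exists_add_of_le hb
  have hsub : p * (b + c) + r - (p * b + s) = p * c + (r - s) := by rw [mul_add]; omega
  have hN := padicValNat_factorial_eq_choose_add (p := p)
    (show p * b + s ≤ p * (b + c) + r by rw [mul_add]; omega)
  have hn := padicValNat_factorial_eq_choose_add (p := p) hb
  rw [hsub, padicValNat_factorial_mul_add_of_lt _ hr,
    padicValNat_factorial_mul_add_of_lt _ (hs.trans_lt hr),
    padicValNat_factorial_mul_add_of_lt _ ((r.sub_le s).trans_lt hr)] at hN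
  rw [add_tsub_cancel_left] at hn
  omega

theorem padicValNat_choose_mul_add_of_lt {a b r s : ℕ} (hrs : r < s) (hs : s < p) (hb : b < a) :
    padicValNat p ((p * a + r).choose (p * b + s)) =
      padicValNat p a + 1 + padicValNat p ((a - 1).choose b) := by
  obtain ⟨c, rfl⟩ : ∃ c, a = b + c + 1 := ⟨a - b - 1, by omega⟩
  have hsub : p * (b + c + 1) + r - (p * b + s) = p * c + (p + r - s) := by
    rw [mul_add, mul_add, mul_one]; omega
  have hN := padicValNat_factorial_eq_choose_add (p := p)
    (show p * b + s ≤ p * (b + c + 1) + r by rw [mul_add, mul_add]; omega)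
  have hn := padicValNat_factorial_eq_choose_add (p := p) (le_add_right b c)
  have hsucc : padicValNat p (b + c + 1)! = padicValNat p (b + c + 1) + padicValNat p (b + c)! :=
    by rw [factorial_succ, padicValNat.mul (succ_ne_zero _) (factorial_ne_zero _)]
  rw [hsub, padicValNat_factorial_mul_add_of_lt _ (hrs.trans hs),
    padicValNat_factorial_mul_add_of_lt _ hs,
    padicValNat_factorial_mul_add_of_lt _ (by omega)] at hN
  rw [add_tsub_cancel_left] at hn
  rw [add_tsub_cancel_right]
  omega

theorem sum_range_X_pow_padicValNat_choose_mul_add {R : Type*} [Semiring R] {a b d : ℕ} (hd : d < p) (hb : b < a) :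
    ∑ e ∈ range p, (X : R[X]) ^ padicValNat p ((p * a + d).choose (p * b + e)) =
      (d + 1) • X ^ padicValNat p (a.choose b) +
        (p - d - 1) • X ^ (padicValNat p a + 1 + padicValNat p ((a - 1).choose b)) := by
  rw [range_eq_Ico, ← sum_Ico_consecutive _ (zero_le (d + 1)) hd]
  congr 1
  · rw [sum_congr rfl fun e he => by
      rw [padicValNat_choose_mul_add_of_le hd (by simp at he; omega) hb.le], sum_const, card_Ico, Nat.sub_zero]
  · rw [sum_congr rfl fun e he => by
      rw [padicValNat_choose_mul_add_of_lt (by simp at he; omega) (by simp at he; omega) hb],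
      sum_const, card_Ico, Nat.sub_sub]

end Valuation

theorem T_recurrence (p : ℕ) (hp : p.Prime) (n d : ℕ) (hn : 1 ≤ n) (hd : d < p) :
    T p (p * n + d) =
      C ((d : ℤ) + 1) * T p n +
      C ((p : ℤ) - d - 1) * X ^ (padicValNat p n + 1) * T p (n - 1) := by
  have : Fact p.Prime := ⟨hp⟩
  have hT : T p (p * n + d) =
      ∑ m ∈ range n, ∑ e ∈ range p, X ^ padicValNat p ((p * n + d).choose (p * m + e)) +
        ∑ e ∈ range (d + 1), X ^ padicValNat p ((p * n + d).choose (p * n + e)) := by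
    rw [T, add_assoc, sum_range_add, sum_range_mul_eq_sum_sum_range]
  have hTn : T p n = ∑ m ∈ range n, X ^ padicValNat p (n.choose m) + 1 := by
    rw [T, sum_range_succ, choose_self, padicValNat_one_right, pow_zero]
  have hTn1 : T p (n - 1) = ∑ m ∈ range n, X ^ padicValNat p ((n - 1).choose m) := by
    rw [T, Nat.sub_add_cancel hn]
  have htail : ∑ e ∈ range (d + 1), (X : ℤ[X]) ^ padicValNat p ((p * n + d).choose (p * n + e)) =
      (d + 1) • 1 := by
    rw [sum_congr rfl fun e he => by
      rw [padicValNat_choose_mul_add_of_le hd (by simp at he; omega) le_rfl, choose_self,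
        padicValNat_one_right, pow_zero], sum_const, card_range]
  rw [hT, hTn, hTn1, htail, sum_congr rfl fun m hm =>
      sum_range_X_pow_padicValNat_choose_mul_add hd (mem_range.mp hm)]
  have hcast : C ((p : ℤ) - d - 1) = ((p - d - 1 : ℕ) : ℤ[X]) := by
    rw [← C_eq_natCast]; congr 1; omega
  simp only [hcast, map_add, map_one, map_natCast, nsmul_eq_mul, sum_add_distrib, mul_add,
    mul_sum, pow_add, mul_assoc]
  push_cast
  abel
end

section
/- Let p be a prime, n ≥ 1, d ∈ {0,…,p−1} with p·n + d ≥ 1. Then x^{ν_p(p·n + d)+1}·T_p(p·n + d − 1, x) = d·x·T_p(n, x) + (p − d)·x^{ν_p(n)+2}·T_p(n − 1, x), where T_p(n, x) = Σ_{m=0}^{n} x^{ν_p(C(n,m))}. -/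
open Polynomial

lemma digitSum_mul_add {p : ℕ} (hp : 1 < p) (a : ℕ) {b : ℕ} (hb : b < p) :
    (p.digits (p * a + b)).sum = (p.digits a).sum + b := by
  rcases Nat.eq_zero_or_pos (p * a + b) with h | h
  · have ha : a = 0 := by
      rcases Nat.eq_zero_or_pos a with h' | h'
      · exact h'
      · exfalso; nlinarith
    simp [ha] at h ⊢
    simp [h]
  · rw [Nat.digits_def' hp h]
    have h1 : (p * a + b) % p = b := by
      rw [Nat.mul_add_mod]; exact Nat.mod_eq_of_lt hb
    have h2 : (p * a + b) / p = a := by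
      rw [Nat.mul_add_div (by omega)]
      simp [Nat.div_eq_of_lt hb]
    rw [h1, h2, List.sum_cons]
    omega

lemma digitSum_pred {p : ℕ} (hp : p.Prime) :
    ∀ n : ℕ, 0 < n →
      (p.digits (n - 1)).sum + 1 = (p.digits n).sum + (p - 1) * padicValNat p n := by
  have hp1 : 1 < p := hp.one_lt
  haveI : Fact p.Prime := ⟨hp⟩
  intro n
  induction n using Nat.strong_induction_on with
  | _ n ih =>
    intro hn
    by_cases hdvd : p ∣ n
    · obtain ⟨q, hq⟩ := hdvd
      have hq0 : 0 < q := Nat.pos_of_ne_zero (by rintro rfl; omega)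
      have hpq : p ≤ p * q := Nat.le_mul_of_pos_right p hq0
      have hqn : q < n := by
        subst hq
        calc q < 2 * q := by omega
        _ ≤ p * q := Nat.mul_le_mul_right q hp1
      have hmul : p * (q - 1) = p * q - p := by
        rw [Nat.mul_sub, Nat.mul_one]
      have h1 : n - 1 = p * (q - 1) + (p - 1) := by omega
      have h2 : (p.digits (n - 1)).sum = (p.digits (q - 1)).sum + (p - 1) := by
        rw [h1, digitSum_mul_add hp1 _ (by omega)]
      have h3 : (p.digits n).sum = (p.digits q).sum := by
        rw [hq]
        simpa using digitSum_mul_add hp1 q (show 0 < p by omega)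
      have h4 : padicValNat p n = padicValNat p q + 1 := by
        rw [hq, padicValNat.mul (by omega) (by omega), padicValNat.self hp1]
        omega
      have h5 := ih q hqn hq0
      rw [h2, h3, h4, Nat.mul_add]
      omega
    · have hmod : n % p ≠ 0 := by
        intro h; exact hdvd (Nat.dvd_of_mod_eq_zero h)
      have hn' : n = p * (n / p) + n % p := (Nat.div_add_mod n p).symm
      have hlt : n % p < p := Nat.mod_lt _ (by omega)
      have h1 : n - 1 = p * (n / p) + (n % p - 1) := by omega
      have h2 : (p.digits (n - 1)).sum = (p.digits (n / p)).sum + (n % p - 1) := by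
        rw [h1, digitSum_mul_add hp1 _ (by omega)]
      have h3 : (p.digits n).sum = (p.digits (n / p)).sum + n % p := by
        conv_lhs => rw [hn']
        rw [digitSum_mul_add hp1 _ hlt]
      have h4 : padicValNat p n = 0 := padicValNat.eq_zero_of_not_dvd hdvd
      rw [h2, h3, h4]
      omega

lemma digitSum_choose {p : ℕ} (hp : p.Prime) {k n : ℕ} (h : k ≤ n) :
    (p.digits k).sum + (p.digits (n - k)).sum =
      (p.digits n).sum + (p - 1) * padicValNat p (n.choose k) := by
  haveI : Fact p.Prime := ⟨hp⟩
  have key := sub_one_mul_padicValNat_choose_eq_sub_sum_digits (p := p) h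
  -- inequality: digit sum subadditivity via Legendre
  have hfac : padicValNat p k.factorial + padicValNat p (n - k).factorial ≤ padicValNat p n.factorial := by
    have hmul : n.choose k * (k.factorial * (n - k).factorial) = n.factorial := by rw [← Nat.mul_assoc]; exact Nat.choose_mul_factorial_mul_factorial h
    have : padicValNat p n.factorial =
        padicValNat p (n.choose k) + (padicValNat p k.factorial + padicValNat p (n - k).factorial) := by
      rw [← hmul, padicValNat.mul (Nat.choose_pos h).ne'
        (by positivity), padicValNat.mul (Nat.factorial_ne_zero k) (Nat.factorial_ne_zero (n - k))]
    omega
  have l1 := sub_one_mul_padicValNat_factorial (p := p) n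
  have l2 := sub_one_mul_padicValNat_factorial (p := p) k
  have l3 := sub_one_mul_padicValNat_factorial (p := p) (n - k)
  have d1 := Nat.digit_sum_le p n
  have d2 := Nat.digit_sum_le p k
  have d3 := Nat.digit_sum_le p (n - k)
  have hineq : (p - 1) * padicValNat p k.factorial + (p - 1) * padicValNat p (n - k).factorial ≤
      (p - 1) * padicValNat p n.factorial := by
    rw [← Nat.mul_add]
    exact Nat.mul_le_mul_left _ hfac
  omega

lemma val_low {p : ℕ} (hp : p.Prime) {n' a r b : ℕ} (hb : b ≤ r) (hr : r < p) (ha : a ≤ n') :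
    padicValNat p ((p * n' + r).choose (p * a + b)) = padicValNat p (n'.choose a) := by
  have hp1 : 1 < p := hp.one_lt
  have hpa : p * a ≤ p * n' := Nat.mul_le_mul_left p ha
  have hm : p * a + b ≤ p * n' + r := by omega
  have hsub : p * n' + r - (p * a + b) = p * (n' - a) + (r - b) := by
    have : p * (n' - a) = p * n' - p * a := Nat.mul_sub p n' a
    omega
  have h1 := digitSum_choose hp hm
  have h2 := digitSum_choose hp ha
  rw [hsub, digitSum_mul_add hp1 a (by omega), digitSum_mul_add hp1 (n' - a) (by omega),
    digitSum_mul_add hp1 n' hr] at h1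
  have key : (p - 1) * padicValNat p ((p * n' + r).choose (p * a + b)) =
      (p - 1) * padicValNat p (n'.choose a) := by omega
  exact Nat.eq_of_mul_eq_mul_left (by omega) key

lemma val_high {p : ℕ} (hp : p.Prime) {n' a r b : ℕ} (hrb : r < b) (hb : b < p) (ha : a < n') :
    padicValNat p ((p * n' + r).choose (p * a + b)) =
      padicValNat p ((n' - 1).choose a) + padicValNat p n' + 1 := by
  have hp1 : 1 < p := hp.one_lt
  have hpa : p * (a + 1) ≤ p * n' := Nat.mul_le_mul_left p (by omega)
  have hpa' : p * (a + 1) = p * a + p := by ring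
  have hm : p * a + b ≤ p * n' + r := by omega
  have hsub : p * n' + r - (p * a + b) = p * (n' - 1 - a) + (p + r - b) := by
    have he : n' - 1 - a = n' - (a + 1) := by omega
    have : p * (n' - 1 - a) = p * n' - p * (a + 1) := by rw [he, Nat.mul_sub]
    omega
  have ha' : a ≤ n' - 1 := by omega
  have h1 := digitSum_choose hp hm
  have h2 := digitSum_choose hp ha'
  have h3 := digitSum_pred hp n' (by omega)
  rw [hsub, digitSum_mul_add hp1 a (by omega), digitSum_mul_add hp1 (n' - 1 - a) (by omega),
    digitSum_mul_add hp1 n' (by omega)] at h1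
  have key : (p - 1) * padicValNat p ((p * n' + r).choose (p * a + b)) =
      (p - 1) * (padicValNat p ((n' - 1).choose a) + padicValNat p n' + 1) := by
    rw [Nat.mul_add, Nat.mul_add, Nat.mul_one]
    omega
  exact Nat.eq_of_mul_eq_mul_left (by omega) key

lemma sum_range_mul' {M : Type*} [AddCommMonoid M] (f : ℕ → M) (p n : ℕ) :
    ∑ m ∈ Finset.range (p * n), f m =
      ∑ a ∈ Finset.range n, ∑ b ∈ Finset.range p, f (p * a + b) := by
  induction n with
  | zero => simp
  | succ n ih =>
    rw [Finset.sum_range_succ, ← ih, Nat.mul_succ, Finset.sum_range_add]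

lemma T_mul_pred (p : ℕ) (hp : p.Prime) (n : ℕ) :
    T p (p * n + (p - 1)) = C (p : ℤ) * T p n := by
  have hp1 : 1 < p := hp.one_lt
  have h1 : p * n + (p - 1) + 1 = p * (n + 1) := by
    have : p * (n + 1) = p * n + p := Nat.mul_succ p n
    omega
  rw [T, h1, sum_range_mul']
  have h2 : ∀ a ∈ Finset.range (n + 1), ∀ b ∈ Finset.range p,
      (X : Polynomial ℤ) ^ padicValNat p ((p * n + (p - 1)).choose (p * a + b)) =
      X ^ padicValNat p (n.choose a) := by
    intro a ha b hb
    rw [val_low hp (by simp at hb; omega) (by omega) (by simp at ha; omega)]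
  rw [Finset.sum_congr rfl (fun a ha => Finset.sum_congr rfl (h2 a ha))]
  simp only [Finset.sum_const, Finset.card_range, T, nsmul_eq_mul]
  rw [Finset.mul_sum]
  simp [C_eq_natCast]

lemma T_mul_add (p : ℕ) (hp : p.Prime) (n r : ℕ) (hn : 1 ≤ n) (hr : r < p) :
    T p (p * n + r) = C ((r : ℤ) + 1) * T p n +
      C ((p : ℤ) - (r + 1)) * X ^ (padicValNat p n + 1) * T p (n - 1) := by
  have hp1 : 1 < p := hp.one_lt
  have hT1 : T p n = (∑ a ∈ Finset.range n, (X : Polynomial ℤ) ^ padicValNat p (n.choose a)) + 1 := by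
    rw [T, Finset.sum_range_succ, Nat.choose_self]
    simp
  have hT2 : T p (n - 1) =
      ∑ a ∈ Finset.range n, (X : Polynomial ℤ) ^ padicValNat p ((n - 1).choose a) := by
    have h : n - 1 + 1 = n := by omega
    rw [T, h]
  have e0 : T p (p * n + r) =
      ∑ m ∈ Finset.range (p * n + (r + 1)), (X : Polynomial ℤ) ^
        padicValNat p ((p * n + r).choose m) := by
    rw [T, show p * n + r + 1 = p * n + (r + 1) from by omega]
  rw [e0, Finset.sum_range_add, sum_range_mul']
  have hsec : ∀ j ∈ Finset.range (r + 1),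
      (X : Polynomial ℤ) ^ padicValNat p ((p * n + r).choose (p * n + j)) = 1 := by
    intro j hj
    simp only [Finset.mem_range] at hj
    rw [val_low hp (by omega) hr (le_refl n)]
    simp
  rw [Finset.sum_congr rfl hsec, Finset.sum_const, Finset.card_range]
  have hinner : ∀ a ∈ Finset.range n,
      (∑ b ∈ Finset.range p, (X : Polynomial ℤ) ^
        padicValNat p ((p * n + r).choose (p * a + b))) =
      (r + 1) • (X : Polynomial ℤ) ^ padicValNat p (n.choose a) +
      (p - (r + 1)) • (X ^ (padicValNat p n + 1) *
        X ^ padicValNat p ((n - 1).choose a)) := by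
    intro a ha
    simp only [Finset.mem_range] at ha
    rw [show Finset.range p = Finset.range ((r + 1) + (p - (r + 1))) from by congr 1; omega]
    rw [Finset.sum_range_add]
    congr 1
    · rw [Finset.sum_congr rfl (fun b hb => by
        simp only [Finset.mem_range] at hb
        rw [val_low hp (show b ≤ r by omega) hr (le_of_lt ha)])]
      rw [Finset.sum_const, Finset.card_range]
    · rw [Finset.sum_congr rfl (fun j hj => by
        simp only [Finset.mem_range] at hj
        rw [val_high hp (show r < r + 1 + j by omega) (show r + 1 + j < p by omega) ha,
          show padicValNat p ((n - 1).choose a) + padicValNat p n + 1 =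
            (padicValNat p n + 1) + padicValNat p ((n - 1).choose a) by omega,
          pow_add])]
      rw [Finset.sum_const, Finset.card_range]
  rw [Finset.sum_congr rfl hinner, Finset.sum_add_distrib, ← Finset.smul_sum, ← Finset.smul_sum,
    ← Finset.mul_sum, hT1, hT2]
  have hc1 : ((r : ℤ) + 1) = ((r + 1 : ℕ) : ℤ) := by push_cast; ring
  have hc2 : ((p : ℤ) - (r + 1)) = ((p - (r + 1) : ℕ) : ℤ) := by
    rw [Nat.cast_sub (by omega)]; push_cast; ring
  rw [hc2, hc1, C_eq_natCast, C_eq_natCast]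
  simp only [nsmul_eq_mul]
  ring

theorem T_recurrence' (p : ℕ) (hp : p.Prime) (n d : ℕ) (hn : 1 ≤ n) (hd : d < p)
    (hnd : 1 ≤ p * n + d) :
    X ^ (padicValNat p (p * n + d) + 1) * T p (p * n + d - 1) =
      C (d : ℤ) * X * T p n +
      C ((p : ℤ) - d) * X ^ (padicValNat p n + 2) * T p (n - 1) := by
  haveI : Fact p.Prime := ⟨hp⟩
  have hp1 : 1 < p := hp.one_lt
  rcases Nat.eq_zero_or_pos d with hd0 | hd1
  · subst hd0
    have hpn : p ≤ p * n := Nat.le_mul_of_pos_right p hn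
    have hν : padicValNat p (p * n + 0) = padicValNat p n + 1 := by
      rw [Nat.add_zero, padicValNat.mul (by omega) (by omega), padicValNat.self hp1]
      omega
    have hsub : p * n + 0 - 1 = p * (n - 1) + (p - 1) := by
      have : p * (n - 1) = p * n - p := Nat.mul_sub p n 1 ▸ by rw [Nat.mul_one]
      omega
    rw [hν, hsub, T_mul_pred p hp (n - 1)]
    simp only [Nat.cast_zero, map_zero, zero_mul, mul_zero, zero_add, sub_zero]
    ring
  · have hν : padicValNat p (p * n + d) = 0 := by
      apply padicValNat.eq_zero_of_not_dvd
      intro h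
      have hdd : p ∣ d := (Nat.dvd_add_right ⟨n, by ring⟩).mp h
      have := Nat.le_of_dvd (by omega) hdd
      omega
    have hsub : p * n + d - 1 = p * n + (d - 1) := by omega
    rw [hν, hsub, T_mul_add p hp n (d - 1) hn (by omega)]
    have h1 : ((d - 1 : ℕ) : ℤ) + 1 = (d : ℤ) := by
      rw [Nat.cast_sub (by omega)]; push_cast; ring
    rw [h1]
    ring
end

section
/- Let p be a prime and n ≥ 0 with standard base-p digits n_0, n_1, …, n_ℓ (least significant first). Define T_p(n, x) = Σ_{m=0}^{n} x^{ν_p(C(n,m))}, and for each d ∈ {0,…,p−1} let M_p(d) be the 2×2 matrix over ℤ[x] with rows [d+1, p−d−1] and [d·x, (p−d)·x]. Then T_p(n, x) = [1, 0] · M_p(n_0) · M_p(n_1) ⋯ M_p(n_ℓ) · [1, 0]^T. -/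
/-!
By Kummer's theorem, `ν_p(C(n, m)) = #{i | n mod p^i < m mod p^i}` is the number of borrows in the
base-`p` subtraction `n - m`. Going through the digits from the least significant one, a borrow
leaves the digit where `n` has `d` and `m` has `e` iff `d < e + s`, `s` being the borrow coming in.
For fixed `d` this happens for `p - d - 1 + s` of the `p` digits `e` and fails for `d + 1 - s`, and
an incoming borrow costs a factor `x`: these are the entries of `M_p(d)`, row `s`. Hence entry
`(s, 0)` of the product sums `x ^ (number of borrows)` over all `m < p^L` subtracted with incoming
borrow `s` and without final borrow; for `s = 0` these are the `m ≤ n`, and the sum is `T_p(n)`.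
-/

open Polynomial

/-- The matrix `M_p(d)` with rows `[d+1, p−d−1]` and `[d·x, (p−d)·x]`. -/
noncomputable def M (p d : ℕ) : Matrix (Fin 2) (Fin 2) (Polynomial ℤ) :=
  !![C ((d : ℤ) + 1), C ((p : ℤ) - d - 1);
     C (d : ℤ) * X, C ((p : ℤ) - d) * X]

open Finset

lemma add_mul_lt_add_mul_add_iff {p d e s A B : ℕ} (hd : d < p) (he : e < p) (hs : s ≤ 1) :
    d + p * A < e + p * B + s ↔ A < B + if d < e + s then 1 else 0 := by
  rcases lt_trichotomy A B with h | rfl | h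
  · have : p * A + p ≤ p * B := by rw [← Nat.mul_succ]; exact Nat.mul_le_mul_left p h
    split_ifs <;> omega
  · split_ifs <;> omega
  · have : p * B + p ≤ p * A := by rw [← Nat.mul_succ]; exact Nat.mul_le_mul_left p h
    split_ifs <;> omega

lemma mod_pow_succ_lt_iff {p n m s : ℕ} (hp : 0 < p) (hs : s ≤ 1) (i : ℕ) :
    n % p ^ (i + 1) < m % p ^ (i + 1) + s ↔
      n / p % p ^ i < m / p % p ^ i + if n % p < m % p + s then 1 else 0 := by
  rw [pow_succ', Nat.mod_mul, Nat.mod_mul]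
  exact add_mul_lt_add_mul_add_iff (Nat.mod_lt n hp) (Nat.mod_lt m hp) hs

lemma le_mod_add_mod_sub_iff {P m n : ℕ} (hP : 0 < P) (hmn : m ≤ n) :
    P ≤ m % P + (n - m) % P ↔ n % P < m % P := by
  have h := Nat.add_mod_add_ite m (n - m) P
  rw [Nat.add_sub_cancel' hmn] at h
  have := Nat.mod_lt (n - m) hP
  split_ifs at h <;> omega

lemma padicValNat_choose_eq_card_filter {p n m L : ℕ} [hp : Fact p.Prime] (hmn : m ≤ n)
    (hn : n < p ^ L) :
    padicValNat p (n.choose m) = #{i ∈ range (L + 1) | n % p ^ i < m % p ^ i} := by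
  have hlog : Nat.log p n < L + 1 :=
    Nat.log_lt_of_lt_pow' L.succ_ne_zero (hn.trans_le (Nat.pow_le_pow_right hp.out.pos L.le_succ))
  simp only [padicValNat_choose hmn hlog, le_mod_add_mod_sub_iff (pow_pos hp.out.pos _) hmn]
  have h0 : ¬n % p ^ 0 < m % p ^ 0 := by simp [Nat.mod_one]
  congr 1
  ext i
  simp only [mem_filter, mem_Ico, mem_range]
  constructor
  · rintro ⟨⟨-, hi⟩, h⟩
    exact ⟨hi, h⟩
  · rintro ⟨hi, h⟩
    exact ⟨⟨Nat.pos_of_ne_zero (by rintro rfl; exact h0 h), hi⟩, h⟩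

lemma card_filter_mod_pow_lt_succ {p n m s : ℕ} (hp : 0 < p) (hs : s ≤ 1) (L : ℕ) :
    #{i ∈ range (L + 1) | n % p ^ i < m % p ^ i + s} =
      #{i ∈ range L | n / p % p ^ i < m / p % p ^ i + if n % p < m % p + s then 1 else 0} + s :=
    by
  simp only [card_filter, sum_range_succ', mod_pow_succ_lt_iff hp hs, pow_zero, Nat.mod_one]
  congr 1
  split_ifs <;> omega

lemma sum_range_mul_eq_sum_sum {β : Type*} [AddCommMonoid β] (f : ℕ → β) (p q : ℕ) :
    ∑ m ∈ range (p * q), f m = ∑ e ∈ range p, ∑ k ∈ range q, f (e + p * k) := by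
  induction q with
  | zero => simp
  | succ q ih =>
    rw [Nat.mul_succ, sum_range_add, ih]
    simp only [sum_range_succ, sum_add_distrib, add_comm (p * q)]

/-- For `s ≤ 1`, `n % p ^ i < m % p ^ i + s` says that subtracting `m + s` from `n` in base `p`
borrows out of the lowest `i` digits; at `i = 0` this is just the incoming borrow `s`. -/
noncomputable def borrowSum (p n s L : ℕ) : ℤ[X] :=
  ∑ m ∈ range (p ^ L), if n % p ^ L < m % p ^ L + s then 0
    else X ^ #{i ∈ range (L + 1) | n % p ^ i < m % p ^ i + s}

lemma borrowSum_succ {p s : ℕ} (hp : 0 < p) (hs : s ≤ 1) (n L : ℕ) :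
    borrowSum p n s (L + 1) =
      ∑ e ∈ range p, X ^ s * borrowSum p (n / p) (if n % p < e + s then 1 else 0) L := by
  have hrange : range (p ^ (L + 1)) = range (p * p ^ L) := by rw [pow_succ']
  rw [borrowSum, hrange, sum_range_mul_eq_sum_sum]
  refine sum_congr rfl fun e he => ?_
  have he : e < p := mem_range.1 he
  rw [borrowSum, mul_sum]
  refine sum_congr rfl fun k _ => ?_
  have hmod : (e + p * k) % p = e := by rw [Nat.add_mul_mod_self_left, Nat.mod_eq_of_lt he]
  have hdiv : (e + p * k) / p = k := by
    rw [Nat.add_mul_div_left _ _ hp, Nat.div_eq_of_lt he, zero_add]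
  simp only [mod_pow_succ_lt_iff hp hs, card_filter_mod_pow_lt_succ hp hs, hmod, hdiv]
  rw [mul_ite, mul_zero, pow_add, mul_comm]

lemma sum_range_comp_ite_lt {β : Type*} [AddCommMonoid β] (f : ℕ → β) {p d s : ℕ}
    (hd : d < p) :
    ∑ e ∈ range p, f (if d < e + s then 1 else 0) =
      (d + 1 - s) • f 0 + (p - (d + 1 - s)) • f 1 := by
  calc ∑ e ∈ range p, f (if d < e + s then 1 else 0)
      = ∑ e ∈ range (d + 1 - s + (p - (d + 1 - s))), f (if d < e + s then 1 else 0) := by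
        rw [Nat.add_sub_of_le (by omega)]
    _ = (d + 1 - s) • f 0 + (p - (d + 1 - s)) • f 1 := by
        rw [sum_range_add]
        congr 1
        · rw [sum_congr rfl fun e he => by rw [if_neg (by have := mem_range.1 he; omega)],
            sum_const, card_range]
        · rw [sum_congr rfl fun e _ => by rw [if_pos (by omega)], sum_const, card_range]

lemma M_apply_zero (p d : ℕ) (s : Fin 2) :
    M p d s 0 = ((d + 1 - s : ℕ) : ℤ[X]) * X ^ (s : ℕ) := by
  fin_cases s <;> simp [M]

lemma M_apply_one {p d : ℕ} (hd : d < p) (s : Fin 2) :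
    M p d s 1 = ((p - (d + 1 - s) : ℕ) : ℤ[X]) * X ^ (s : ℕ) := by
  fin_cases s <;> simp [M, Nat.cast_sub (show d + 1 ≤ p by omega), Nat.cast_sub hd.le, sub_sub]

lemma prod_map_M_apply_zero {p : ℕ} (ds : List ℕ) (hds : ∀ d ∈ ds, d < p) (s : Fin 2) :
    (ds.map (M p)).prod s 0 = borrowSum p (Nat.ofDigits p ds) s ds.length := by
  induction ds generalizing s with
  | nil => fin_cases s <;> simp [borrowSum]
  | cons d ds ih =>
    have hd : d < p := hds d List.mem_cons_self
    have hp : 0 < p := by omega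
    have ih' (u : Fin 2) := ih (fun d' hd' => hds d' (List.mem_cons_of_mem d hd')) u
    have hmod : Nat.ofDigits p (d :: ds) % p = d := by
      rw [Nat.ofDigits_cons, Nat.add_mul_mod_self_left, Nat.mod_eq_of_lt hd]
    have hdiv : Nat.ofDigits p (d :: ds) / p = Nat.ofDigits p ds := by
      rw [Nat.ofDigits_cons, Nat.add_mul_div_left _ _ hp, Nat.div_eq_of_lt hd, zero_add]
    rw [List.map_cons, List.prod_cons, Matrix.mul_apply, Fin.sum_univ_two, ih' 0, ih' 1,
      List.length_cons, borrowSum_succ hp s.is_le, hmod, hdiv, ← mul_sum,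
      sum_range_comp_ite_lt (fun u => borrowSum p (Nat.ofDigits p ds) u ds.length) hd,
      M_apply_zero, M_apply_one hd]
    simp only [nsmul_eq_mul, Fin.val_zero, Fin.val_one]
    ring

lemma borrowSum_zero_eq_T {p n L : ℕ} (hp : p.Prime) (hn : n < p ^ L) :
    borrowSum p n 0 L = T p n := by
  have := Fact.mk hp
  have hfilter : {m ∈ range (p ^ L) | m ≤ n} = range (n + 1) := by
    ext m
    simp only [mem_filter, mem_range]
    omega
  calc borrowSum p n 0 L
      = ∑ m ∈ range (p ^ L),
          if m ≤ n then X ^ #{i ∈ range (L + 1) | n % p ^ i < m % p ^ i} else 0 := by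
        refine sum_congr rfl fun m hm => ?_
        rw [Nat.mod_eq_of_lt hn, Nat.mod_eq_of_lt (mem_range.1 hm)]
        simp only [add_zero, not_lt.symm, ite_not]
    _ = T p n := by
        rw [← sum_filter, hfilter, T]
        refine sum_congr rfl fun m hm => ?_
        rw [padicValNat_choose_eq_card_filter (Nat.lt_succ_iff.1 (mem_range.1 hm)) hn]

theorem T_matrix_product (p : ℕ) (hp : p.Prime) (n : ℕ) :
    T p n = (((Nat.digits p n).map (M p)).prod) 0 0 := by
  have h := prod_map_M_apply_zero (Nat.digits p n) (fun d hd => Nat.digits_lt_base hp.one_lt hd) 0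
  rw [Nat.ofDigits_digits, Fin.val_zero] at h
  rw [h, borrowSum_zero_eq_T hp (Nat.lt_base_pow_length_digits hp.one_lt)]
end

section
/- For all n ≥ 0, T_2(n, −1) = (−1)^{t(n)} · S(n + 1, −2), where t(n) is the Thue–Morse sequence (parity of the number of 1s in the binary representation of n), T_2(n, x) = Σ_{m=0}^{n} x^{ν_2(C(n,m))}, and S(n, x) is the n-th Stern polynomial. -/
open Polynomial Finset

local notation "ν" => padicValNat 2

lemma nu_odd (k : ℕ) : ν (2 * k + 1) = 0 :=
  padicValNat.eq_zero_of_not_dvd (by omega)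

lemma nu_two_mul (k : ℕ) (hk : k ≠ 0) : ν (2 * k) = ν k + 1 := by
  rw [padicValNat.mul (by norm_num) hk, padicValNat.self one_lt_two]
  omega

lemma choose_pos' {n k : ℕ} (h : k ≤ n) : n.choose k ≠ 0 :=
  (Nat.choose_pos h).ne'

lemma nu_mul_eq {a b c d : ℕ} (h : a * b = c * d) (ha : a ≠ 0) (hb : b ≠ 0)
    (hc : c ≠ 0) (hd : d ≠ 0) : ν a + ν b = ν c + ν d := by
  rw [← padicValNat.mul ha hb, ← padicValNat.mul hc hd, h]

/-- ν₂ C(2n, 2j) = ν₂ C(n, j). -/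
lemma nuC (n : ℕ) : ∀ j, j ≤ n → ν ((2 * n).choose (2 * j)) = ν (n.choose j) := by
  intro j
  induction j with
  | zero => simp
  | succ j ih =>
    intro hj
    have hjn : j < n := hj
    have ihj := ih hjn.le
    -- e1 : C(2n,2j+1)*(2j+1) = C(2n,2j)*(2n-2j)
    have e1 := Nat.choose_succ_right_eq (2 * n) (2 * j)
    have e2 := Nat.choose_succ_right_eq (2 * n) (2 * j + 1)
    have e3 := Nat.choose_succ_right_eq n j
    have h1 : 2 * n - 2 * j = 2 * (n - j) := by omega
    have h2 : 2 * n - (2 * j + 1) = 2 * (n - j - 1) + 1 := by omega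
    have h3 : 2 * j + 1 + 1 = 2 * (j + 1) := by omega
    rw [h1] at e1
    rw [h2, h3] at e2
    have v1 := nu_mul_eq e1 (choose_pos' (by omega)) (by omega)
      (choose_pos' (by omega)) (by omega)
    have v2 := nu_mul_eq e2 (choose_pos' (by omega)) (by omega)
      (choose_pos' (by omega)) (by omega)
    have v3 := nu_mul_eq e3 (choose_pos' (by omega)) (by omega)
      (choose_pos' (by omega)) (by omega)
    rw [nu_odd, nu_two_mul _ (by omega)] at v1
    rw [nu_odd, nu_two_mul _ (by omega)] at v2
    omega

/-- ν₂ C(2n, 2j+1) = ν₂ C(n, j) + ν₂(n-j) + 1 for j < n. -/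
lemma nuD (n j : ℕ) (h : j < n) :
    ν ((2 * n).choose (2 * j + 1)) = ν (n.choose j) + ν (n - j) + 1 := by
  have e1 := Nat.choose_succ_right_eq (2 * n) (2 * j)
  have h1 : 2 * n - 2 * j = 2 * (n - j) := by omega
  rw [h1] at e1
  have v1 := nu_mul_eq e1 (choose_pos' (by omega)) (by omega)
    (choose_pos' (by omega)) (by omega)
  rw [nu_odd, nu_two_mul _ (by omega)] at v1
  have := nuC n j h.le
  omega

/-- ν₂ C(2n+1, 2j) = ν₂ C(n, j). -/
lemma nuA (n j : ℕ) (h : j ≤ n) : ν ((2 * n + 1).choose (2 * j)) = ν (n.choose j) := by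
  have e := Nat.choose_mul_succ_eq (2 * n) (2 * j)
  have h1 : 2 * n + 1 - 2 * j = 2 * (n - j) + 1 := by omega
  rw [h1] at e
  have v := nu_mul_eq e (choose_pos' (by omega)) (by omega)
    (choose_pos' (by omega)) (by omega)
  rw [nu_odd, nu_odd] at v
  have := nuC n j h
  omega

/-- ν₂ C(2n+1, 2j+1) = ν₂ C(n, j). -/
lemma nuB (n j : ℕ) (h : j ≤ n) : ν ((2 * n + 1).choose (2 * j + 1)) = ν (n.choose j) := by
  have e := Nat.choose_succ_right_eq (2 * n + 1) (2 * j)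
  have h1 : 2 * n + 1 - 2 * j = 2 * (n - j) + 1 := by omega
  rw [h1] at e
  have v := nu_mul_eq e (choose_pos' (by omega)) (by omega)
    (choose_pos' (by omega)) (by omega)
  rw [nu_odd, nu_odd] at v
  have := nuA n j h
  omega

lemma sum_range_even_odd (F : ℕ → ℤ) (n : ℕ) :
    ∑ i ∈ range (2 * n), F i = ∑ i ∈ range n, F (2 * i) + ∑ i ∈ range n, F (2 * i + 1) := by
  induction n with
  | zero => simp
  | succ n ih =>
    have h : 2 * (n + 1) = 2 * n + 1 + 1 := by ring
    rw [h, Finset.sum_range_succ, Finset.sum_range_succ, ih,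
      Finset.sum_range_succ, Finset.sum_range_succ]
    ring

/-- The matrices defining the Stern polynomials. -/
noncomputable def A : ℕ → Matrix (Fin 2) (Fin 2) (Polynomial ℤ)
  | 0 => !![X, 0; 1, 1]
  | _ => !![1, 1; 0, X]

/-- The `n`-th Stern polynomial `S(n, x) = [1,0]·A(n_0)⋯A(n_ℓ)·[0,1]ᵀ`. -/
noncomputable def sternPoly (n : ℕ) : Polynomial ℤ :=
  (((Nat.digits 2 n).map A).prod) 0 1

noncomputable def P (n : ℕ) : Matrix (Fin 2) (Fin 2) (Polynomial ℤ) :=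
  ((Nat.digits 2 n).map A).prod

noncomputable def Epoly (n : ℕ) : Polynomial ℤ := P n 1 1

lemma stern_eq_P (n : ℕ) : sternPoly n = P n 0 1 := rfl

lemma P_zero : P 0 = 1 := by simp [P]

lemma P_pos (n : ℕ) (hn : n ≠ 0) : P n = A (n % 2) * P (n / 2) := by
  rw [P, Nat.digits_def' (by norm_num) (Nat.pos_of_ne_zero hn), List.map_cons,
    List.prod_cons]
  rfl

lemma P_even (m : ℕ) (hm : m ≠ 0) : P (2 * m) = A 0 * P m := by
  have h1 : 2 * m % 2 = 0 := by omega
  have h2 : 2 * m / 2 = m := by omega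
  rw [P_pos (2 * m) (by omega), h1, h2]

lemma P_odd (m : ℕ) : P (2 * m + 1) = A 1 * P m := by
  have h1 : (2 * m + 1) % 2 = 1 := by omega
  have h2 : (2 * m + 1) / 2 = m := by omega
  rw [P_pos (2 * m + 1) (by omega), h1, h2]

lemma stern_zero : sternPoly 0 = 0 := by
  rw [stern_eq_P, P_zero]; simp [Matrix.one_apply]

lemma E_zero : Epoly 0 = 1 := by
  rw [Epoly, P_zero]; simp [Matrix.one_apply]

lemma stern_even (m : ℕ) (hm : m ≠ 0) : sternPoly (2 * m) = X * sternPoly m := by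
  rw [stern_eq_P, stern_eq_P, P_even m hm]
  simp [A, Matrix.mul_apply, Fin.sum_univ_two]

lemma stern_odd (m : ℕ) : sternPoly (2 * m + 1) = sternPoly m + Epoly m := by
  rw [stern_eq_P, stern_eq_P, Epoly, P_odd m]
  simp [A, Matrix.mul_apply, Fin.sum_univ_two]

lemma E_even (m : ℕ) (hm : m ≠ 0) : Epoly (2 * m) = sternPoly m + Epoly m := by
  rw [Epoly, Epoly, stern_eq_P, P_even m hm]
  simp [A, Matrix.mul_apply, Fin.sum_univ_two]

lemma E_odd (m : ℕ) : Epoly (2 * m + 1) = X * Epoly m := by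
  rw [Epoly, Epoly, P_odd m]
  simp [A, Matrix.mul_apply, Fin.sum_univ_two]

lemma stern_one : sternPoly 1 = 1 := by
  have := stern_odd 0
  simpa [stern_zero, E_zero] using this

lemma E_eq_stern (n : ℕ) : Epoly n = sternPoly (n + 1) := by
  induction n using Nat.strong_induction_on with
  | _ n ih =>
    rcases Nat.even_or_odd n with ⟨m, hm⟩ | ⟨m, hm⟩
    · rcases Nat.eq_zero_or_pos m with rfl | hmp
      · simpa [hm] using (E_zero.trans stern_one.symm)
      · have hm2 : n = 2 * m := by omega
        subst hm2
        rw [E_even m (by omega), stern_odd m]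
    · have hm2 : n = 2 * m + 1 := by omega
      subst hm2
      rw [E_odd m, ih m (by omega), show 2 * m + 1 + 1 = 2 * (m + 1) by ring,
        stern_even (m + 1) (by omega)]

lemma stern_odd' (m : ℕ) : sternPoly (2 * m + 1) = sternPoly m + sternPoly (m + 1) := by
  rw [stern_odd, E_eq_stern]

lemma eval_stern_even (m : ℕ) (hm : m ≠ 0) :
    (sternPoly (2 * m)).eval (-2) = -2 * (sternPoly m).eval (-2) := by
  rw [stern_even m hm]; simp

lemma eval_stern_odd (m : ℕ) :
    (sternPoly (2 * m + 1)).eval (-2)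
      = (sternPoly m).eval (-2) + (sternPoly (m + 1)).eval (-2) := by
  rw [stern_odd' m]; simp

lemma ts_even (m : ℕ) (hm : m ≠ 0) :
    (Nat.digits 2 (2 * m)).sum = (Nat.digits 2 m).sum := by
  have h1 : 2 * m % 2 = 0 := by omega
  have h2 : 2 * m / 2 = m := by omega
  rw [Nat.digits_def' (by norm_num : 1 < 2) (by omega : 0 < 2 * m), h1, h2, List.sum_cons]
  omega

lemma ts_odd (m : ℕ) :
    (Nat.digits 2 (2 * m + 1)).sum = (Nat.digits 2 m).sum + 1 := by
  have h1 : (2 * m + 1) % 2 = 1 := by omega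
  have h2 : (2 * m + 1) / 2 = m := by omega
  rw [Nat.digits_def' (by norm_num : 1 < 2) (by omega : 0 < 2 * m + 1), h1, h2, List.sum_cons]
  omega

lemma sum_split (F : ℕ → ℤ) (m : ℕ) :
    ∑ k ∈ range (2 * m + 1), F k
      = ∑ i ∈ range (m + 1), F (2 * i) + ∑ i ∈ range m, F (2 * i + 1) := by
  rw [Finset.sum_range_succ (fun k => F k) (2 * m), sum_range_even_odd,
    Finset.sum_range_succ (fun i => F (2 * i)) m]
  ring

lemma main_ind (n : ℕ) :
    (∑ k ∈ range (n + 1), (-1 : ℤ) ^ ν (n.choose k))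
        = (-1) ^ ((Nat.digits 2 n).sum) * (sternPoly (n + 1)).eval (-2) ∧
      (-∑ j ∈ range n, (-1 : ℤ) ^ (ν (n - j) + ν (n.choose j)))
        = (-1) ^ ((Nat.digits 2 n).sum) * (sternPoly n).eval (-2) := by
  induction n using Nat.strong_induction_on with
  | _ n ih =>
  rcases Nat.eq_zero_or_pos n with rfl | hn
  · constructor
    · simp [stern_one]
    · simp [stern_zero]
  rcases Nat.even_or_odd n with ⟨m, hm⟩ | ⟨m, hm⟩
  · -- n = 2 * m with m ≠ 0
    have hne : n = 2 * m := by omega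
    subst hne
    have hm0 : m ≠ 0 := by omega
    obtain ⟨IH1, IH2⟩ := ih m (by omega)
    have heven : ∑ i ∈ range (m + 1), (-1 : ℤ) ^ ν ((2 * m).choose (2 * i))
        = ∑ i ∈ range (m + 1), (-1 : ℤ) ^ ν (m.choose i) :=
      Finset.sum_congr rfl fun i hi => by
        have h : i ≤ m := by have := Finset.mem_range.mp hi; omega
        rw [nuC m i h]
    have hodd : ∑ i ∈ range m, (-1 : ℤ) ^ ν ((2 * m).choose (2 * i + 1))
        = -∑ i ∈ range m, (-1 : ℤ) ^ (ν (m - i) + ν (m.choose i)) := by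
      rw [← Finset.sum_neg_distrib]
      refine Finset.sum_congr rfl fun i hi => ?_
      have h : i < m := Finset.mem_range.mp hi
      rw [nuD m i h, pow_succ, pow_add, pow_add]
      ring
    constructor
    · rw [sum_split (fun k => (-1 : ℤ) ^ ν ((2 * m).choose k)) m, heven, hodd, IH1, IH2,
        ts_even m hm0, eval_stern_odd m]
      ring
    · have he2 : ∑ i ∈ range m, (-1 : ℤ) ^ (ν (2 * m - 2 * i) + ν ((2 * m).choose (2 * i)))
          = -∑ i ∈ range m, (-1 : ℤ) ^ (ν (m - i) + ν (m.choose i)) := by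
        rw [← Finset.sum_neg_distrib]
        refine Finset.sum_congr rfl fun i hi => ?_
        have h : i < m := Finset.mem_range.mp hi
        have h2 : 2 * m - 2 * i = 2 * (m - i) := by omega
        rw [h2, nu_two_mul _ (by omega), nuC m i h.le,
          show ν (m - i) + 1 + ν (m.choose i) = ν (m - i) + ν (m.choose i) + 1 from by omega,
          pow_succ]
        ring
      have ho2 : ∑ i ∈ range m,
            (-1 : ℤ) ^ (ν (2 * m - (2 * i + 1)) + ν ((2 * m).choose (2 * i + 1)))
          = -∑ i ∈ range m, (-1 : ℤ) ^ (ν (m - i) + ν (m.choose i)) := by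
        rw [← Finset.sum_neg_distrib]
        refine Finset.sum_congr rfl fun i hi => ?_
        have h : i < m := Finset.mem_range.mp hi
        have h2 : 2 * m - (2 * i + 1) = 2 * (m - i - 1) + 1 := by omega
        rw [h2, nu_odd, nuD m i h,
          show 0 + (ν (m.choose i) + ν (m - i) + 1) = ν (m - i) + ν (m.choose i) + 1 from by
            omega, pow_succ]
        ring
      rw [sum_range_even_odd
          (fun j => (-1 : ℤ) ^ (ν (2 * m - j) + ν ((2 * m).choose j))) m, he2, ho2,
        ts_even m hm0, eval_stern_even m hm0]
      linear_combination (-2 : ℤ) * IH2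
  · -- n = 2 * m + 1
    have hne : n = 2 * m + 1 := by omega
    subst hne
    obtain ⟨IH1, IH2⟩ := ih m (by omega)
    constructor
    · rw [show 2 * m + 1 + 1 = 2 * (m + 1) from by ring,
        sum_range_even_odd (fun k => (-1 : ℤ) ^ ν ((2 * m + 1).choose k)) (m + 1)]
      have he : ∑ i ∈ range (m + 1), (-1 : ℤ) ^ ν ((2 * m + 1).choose (2 * i))
          = ∑ i ∈ range (m + 1), (-1 : ℤ) ^ ν (m.choose i) :=
        Finset.sum_congr rfl fun i hi => by
          have h : i ≤ m := by have := Finset.mem_range.mp hi; omega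
          rw [nuA m i h]
      have ho : ∑ i ∈ range (m + 1), (-1 : ℤ) ^ ν ((2 * m + 1).choose (2 * i + 1))
          = ∑ i ∈ range (m + 1), (-1 : ℤ) ^ ν (m.choose i) :=
        Finset.sum_congr rfl fun i hi => by
          have h : i ≤ m := by have := Finset.mem_range.mp hi; omega
          rw [nuB m i h]
      rw [he, ho, IH1, ts_odd m, eval_stern_even (m + 1) (by omega), pow_succ]
      ring
    · have hge : ∑ i ∈ range (m + 1),
            (-1 : ℤ) ^ (ν (2 * m + 1 - 2 * i) + ν ((2 * m + 1).choose (2 * i)))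
          = ∑ i ∈ range (m + 1), (-1 : ℤ) ^ ν (m.choose i) :=
        Finset.sum_congr rfl fun i hi => by
          have h : i ≤ m := by have := Finset.mem_range.mp hi; omega
          have h2 : 2 * m + 1 - 2 * i = 2 * (m - i) + 1 := by omega
          rw [h2, nu_odd, nuA m i h, zero_add]
      have hgo : ∑ i ∈ range m,
            (-1 : ℤ) ^ (ν (2 * m + 1 - (2 * i + 1)) + ν ((2 * m + 1).choose (2 * i + 1)))
          = -∑ i ∈ range m, (-1 : ℤ) ^ (ν (m - i) + ν (m.choose i)) := by
        rw [← Finset.sum_neg_distrib]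
        refine Finset.sum_congr rfl fun i hi => ?_
        have h : i < m := Finset.mem_range.mp hi
        have h2 : 2 * m + 1 - (2 * i + 1) = 2 * (m - i) := by omega
        rw [h2, nu_two_mul _ (by omega), nuB m i h.le,
          show ν (m - i) + 1 + ν (m.choose i) = ν (m - i) + ν (m.choose i) + 1 from by omega,
          pow_succ]
        ring
      rw [sum_split
          (fun j => (-1 : ℤ) ^ (ν (2 * m + 1 - j) + ν ((2 * m + 1).choose j))) m, hge, hgo,
        IH1, IH2, ts_odd m, eval_stern_odd m, pow_succ]
      ring

theorem T_two_eval_neg_one (n : ℕ) :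
    (T 2 n).eval (-1) = (-1) ^ ((Nat.digits 2 n).sum) * (sternPoly (n + 1)).eval (-2) := by
  have h : (T 2 n).eval (-1) = ∑ k ∈ range (n + 1), (-1 : ℤ) ^ ν (n.choose k) := by
    rw [T, eval_finset_sum]
    exact Finset.sum_congr rfl fun k _ => by rw [eval_pow, eval_X]
  rw [h, (main_ind n).1]
end

section
/- Let p be a prime, k ≥ 1, n ≥ 0, d ∈ {0,…,p−1}, and 0 ≤ i ≤ k − 1. Let m ∈ ℕ^k with total(m) = p·n + d − i, and let j = n − total(⌊m/p⌋) where ⌊m/p⌋ is the entrywise floor. Then total(m mod p) = p·j + d − i and 0 ≤ j ≤ k − 1. -/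
/-!
Writing each `m t = p * (m t / p) + m t % p` gives `total m = p * total ⌊m/p⌋ + total (m mod p)`,
so `total (m mod p) = p * j + d - i`. Since `0 ≤ total (m mod p) ≤ k (p - 1)`, the bounds `0 ≤ d < p`
and `0 ≤ i ≤ k - 1` leave `0 ≤ j ≤ k - 1` as the only possibility.
-/

open Finset

theorem Finset.sum_natCast_eq_mul_sum_div_add_sum_mod {ι : Type*} (s : Finset ι) (f : ι → ℕ)
    (p : ℕ) :
    (∑ t ∈ s, (f t : ℤ)) = p * ∑ t ∈ s, ((f t / p : ℕ) : ℤ) + ∑ t ∈ s, ((f t % p : ℕ) : ℤ) := by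
  rw [mul_sum, ← sum_add_distrib]
  refine sum_congr rfl fun t _ => ?_
  exact_mod_cast (Nat.div_add_mod (f t) p).symm

theorem Finset.sum_natCast_mod_le {ι : Type*} (s : Finset ι) (f : ι → ℕ) {p : ℕ} (hp : 0 < p) :
    (∑ t ∈ s, ((f t % p : ℕ) : ℤ)) ≤ #s * ((p : ℤ) - 1) := by
  calc (∑ t ∈ s, ((f t % p : ℕ) : ℤ)) ≤ ∑ _t ∈ s, ((p : ℤ) - 1) :=
        sum_le_sum fun t _ => by have := Nat.mod_lt (f t) hp; omega
    _ = #s * ((p : ℤ) - 1) := by rw [sum_const, nsmul_eq_mul]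

theorem Int.nonneg_of_mul_add_sub_nonneg {p j d i : ℤ} (hd₀ : 0 ≤ d) (hdp : d < p) (hi : 0 ≤ i)
    (h : 0 ≤ p * j + d - i) : 0 ≤ j := by
  by_contra! hj
  nlinarith

theorem Int.le_sub_one_of_mul_add_sub_le {p j d i k : ℤ} (hd₀ : 0 ≤ d) (hdp : d < p)
    (hi : i ≤ k - 1) (h : p * j + d - i ≤ k * (p - 1)) : j ≤ k - 1 := by
  by_contra! hj
  nlinarith

theorem total_mod_p_general (p : ℕ) (k : ℕ) (hk : 1 ≤ k) (n d i : ℕ)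
    (hd : d < p) (hi : i ≤ k - 1) (m : Fin k → ℕ)
    (htot : (∑ t, (m t : ℤ)) = p * n + d - i) :
    (∑ t, ((m t % p : ℕ) : ℤ)) = p * ((n : ℤ) - ∑ t, ((m t / p : ℕ) : ℤ)) + d - i ∧
      0 ≤ (n : ℤ) - ∑ t, ((m t / p : ℕ) : ℤ) ∧
      (n : ℤ) - ∑ t, ((m t / p : ℕ) : ℤ) ≤ k - 1 := by
  have hdecomp := sum_natCast_eq_mul_sum_div_add_sum_mod univ m p
  have hmod : (∑ t, ((m t % p : ℕ) : ℤ)) = p * ((n : ℤ) - ∑ t, ((m t / p : ℕ) : ℤ)) + d - i := by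
    linarith
  have hmod_le := sum_natCast_mod_le univ m (d.zero_le.trans_lt hd)
  rw [card_univ, Fintype.card_fin] at hmod_le
  have hdp : (d : ℤ) < p := by exact_mod_cast hd
  have hik : (i : ℤ) ≤ k - 1 := by omega
  refine ⟨hmod, ?_, ?_⟩
  · exact Int.nonneg_of_mul_add_sub_nonneg d.cast_nonneg hdp i.cast_nonneg
      (hmod ▸ sum_nonneg fun t _ => Int.natCast_nonneg _)
  · exact Int.le_sub_one_of_mul_add_sub_le d.cast_nonneg hdp hik (hmod ▸ hmod_le)

theorem total_mod_p (p : ℕ) (hp : p.Prime) (k : ℕ) (hk : 1 ≤ k) (n d i : ℕ)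
    (hd : d < p) (hi : i ≤ k - 1) (m : Fin k → ℕ)
    (htot : (∑ t, (m t : ℤ)) = p * n + d - i) :
    (∑ t, ((m t % p : ℕ) : ℤ)) = p * ((n : ℤ) - ∑ t, ((m t / p : ℕ) : ℤ)) + d - i ∧
      0 ≤ (n : ℤ) - ∑ t, ((m t / p : ℕ) : ℤ) ∧
      (n : ℤ) - ∑ t, ((m t / p : ℕ) : ℤ) ≤ k - 1 :=
  total_mod_p_general p k hk n d i hd hi m htot
end

section
/- Let p be a prime, k ≥ 1, n ≥ 0, d ∈ {0,…,p−1}, and 0 ≤ i ≤ k − 1. Let m ∈ ℕ^k with total(m) = p·n + d − i, and let j = n − total(⌊m/p⌋). Then ν_p((p·n + d)! / (p·n + d − i)!) + ν_p(mult(m)) = ν_p(n! / (n − j)!) + ν_p(mult(⌊m/p⌋)) + j. -/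
open Nat Finset

private lemma padicValNat_prod_factorial {p : ℕ} (hp : p.Prime) {k : ℕ} (m : Fin k → ℕ) :
    padicValNat p (∏ t, (m t)!) = ∑ t, padicValNat p ((m t)!) := by
  have h : (∏ t, (m t)!).factorization = ∑ t, ((m t)!).factorization :=
    Nat.factorization_prod (fun t _ => (m t).factorial_ne_zero)
  have h2 := congrArg (fun f : ℕ →₀ ℕ => f p) h
  simp only [Finsupp.finset_sum_apply] at h2
  rw [← Nat.factorization_def _ hp, h2]
  exact Finset.sum_congr rfl fun t _ => Nat.factorization_def _ hp

private lemma padicValNat_factorial_div {p : ℕ} (hp : p.Prime) (a : ℕ) :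
    padicValNat p (a !) = padicValNat p ((a / p)!) + a / p := by
  haveI : Fact p.Prime := ⟨hp⟩
  rw [← padicValNat_mul_div_factorial (p := p) a, padicValNat_factorial_mul]

private lemma padicValNat_descFactorial {p : ℕ} (hp : p.Prime) {a b : ℕ} (h : b ≤ a) :
    padicValNat p (a.descFactorial b) + padicValNat p ((a - b)!) = padicValNat p (a !) := by
  haveI : Fact p.Prime := ⟨hp⟩
  have hne : a.descFactorial b ≠ 0 := by
    intro h0
    have := Nat.factorial_mul_descFactorial h
    rw [h0, mul_zero] at this
    exact a.factorial_ne_zero this.symm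
  rw [← padicValNat.mul hne (a - b).factorial_ne_zero,
    mul_comm, Nat.factorial_mul_descFactorial h]

private lemma padicValNat_multinomial {p : ℕ} (hp : p.Prime) {k : ℕ} (m : Fin k → ℕ) :
    padicValNat p (Nat.multinomial Finset.univ m) + ∑ t, padicValNat p ((m t)!) =
      padicValNat p ((∑ t, m t)!) := by
  haveI : Fact p.Prime := ⟨hp⟩
  rw [← padicValNat_prod_factorial hp m,
    ← padicValNat.mul (Nat.multinomial_pos _ _).ne' (Finset.prod_ne_zero_iff.mpr
      fun t _ => (m t).factorial_ne_zero),
    mul_comm, Nat.multinomial_spec]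

theorem valuation_relation (p : ℕ) (hp : p.Prime) (k : ℕ) (hk : 1 ≤ k) (n d i : ℕ)
    (hd : d < p) (hi : i ≤ k - 1) (m : Fin k → ℕ)
    (htot : (∑ t, (m t : ℤ)) = p * n + d - i) :
    padicValNat p ((p * n + d).descFactorial i) +
        padicValNat p (Nat.multinomial Finset.univ m) =
      padicValNat p (n.descFactorial (n - ∑ t, m t / p)) +
        padicValNat p (Nat.multinomial Finset.univ fun t => m t / p) +
        (n - ∑ t, m t / p) := by
  haveI : Fact p.Prime := ⟨hp⟩
  set N := p * n + d with hN
  set S := ∑ t, m t / p with hS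
  -- total of m in ℕ
  have hcast : ((∑ t, m t : ℕ) : ℤ) = (N : ℤ) - i := by push_cast [hN] at htot ⊢; linarith
  have hiN : i ≤ N := by omega
  have hsum : ∑ t, m t = N - i := by omega
  -- S ≤ n
  have hpS : p * S ≤ ∑ t, m t := by
    rw [hS, Finset.mul_sum]
    exact Finset.sum_le_sum fun t _ => by
      rw [mul_comm]; exact Nat.div_mul_le_self _ _
  have hSn : S ≤ n := by nlinarith [hpS, hsum, hiN, hd]
  -- key facts
  have h1 := padicValNat_descFactorial hp hiN
  have h2 := padicValNat_multinomial hp m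
  have h3 := padicValNat_descFactorial hp (Nat.sub_le n S)
  have h4 := padicValNat_multinomial hp (fun t => m t / p)
  rw [← hS] at h4
  have hnn : n - (n - S) = S := by omega
  rw [hnn] at h3
  have h5 : padicValNat p (N !) = padicValNat p (n !) + n := by
    rw [padicValNat_factorial_div hp N, hN,
      Nat.mul_add_div hp.pos, Nat.div_eq_of_lt hd, add_zero]
  have h7 : ∑ t, padicValNat p ((m t)!) = (∑ t, padicValNat p ((m t / p)!)) + S := by
    rw [hS, ← Finset.sum_add_distrib]
    exact Finset.sum_congr rfl fun t _ => padicValNat_factorial_div hp (m t)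
  rw [hsum] at h2
  omega
end

section
/- Let p be a prime, k ≥ 1, and n ≥ 0 with standard base-p digits n_0, …, n_ℓ. Define T_{p,k}(n, x) = Σ x^{ν_p(mult(m))}, the sum over all m ∈ ℕ^k with total(m) = n, and let M_{p,k}(d) be the k×k matrix over ℤ[x] whose (i, j) entry (1-indexed) is c_{p,k}(p·(j−1) + d − (i−1))·x^{i−1}, where c_{p,k}(n) is the number of tuples in {0,…,p−1}^k summing to n. Then T_{p,k}(n, x) = e·M_{p,k}(n_0)·M_{p,k}(n_1)⋯M_{p,k}(n_ℓ)·e^T, where e = [1, 0, …, 0]. -/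
open Polynomial

/-- `cpk p k n` is the number of `k`-tuples in `{0,…,p−1}^k` summing to `n`
(`0` for `n < 0`). -/
def cpk (p k : ℕ) (n : ℤ) : ℕ :=
  ((Fintype.piFinset fun _ : Fin k => Finset.range p).filter
    fun d => (∑ i, (d i : ℤ)) = n).card

/-- `Tpk p k n` is the polynomial `∑ x^{ν_p(mult m)}` over `m ∈ ℕ^k` with total `n`. -/
noncomputable def Tpk (p k n : ℕ) : Polynomial ℤ :=
  ∑ m ∈ (Fintype.piFinset fun _ : Fin k => Finset.range (n + 1)).filter
      (fun m => ∑ i, m i = n),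
    X ^ padicValNat p (Nat.multinomial Finset.univ m)

/-- The `k × k` matrix `M_{p,k}(d)` with `(i,j)` entry
`c_{p,k}(p·(j−1) + d − (i−1))·x^{i−1}` (indices `1`-based in the paper). -/
noncomputable def Mpk (p k d : ℕ) : Matrix (Fin k) (Fin k) (Polynomial ℤ) :=
  Matrix.of fun i j => C ((cpk p k ((p : ℤ) * j + d - i) : ℤ)) * X ^ (i : ℕ)

namespace TpkAux


/-- base-`p` digit sum -/
def dsum (p n : ℕ) : ℕ := (Nat.digits p n).sum

lemma legendre {p : ℕ} (hp : p.Prime) (n : ℕ) :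
    n = dsum p n + (p - 1) * padicValNat p n.factorial := by
  haveI : Fact p.Prime := ⟨hp⟩
  have h := sub_one_mul_padicValNat_factorial (p := p) n
  have h2 := Nat.digit_sum_le p n
  unfold dsum
  set w := (p - 1) * padicValNat p n.factorial with hw
  omega

lemma wit2 {p : ℕ} (hp : p.Prime) (x y : ℕ) :
    ∃ t, dsum p x + dsum p y = dsum p (x + y) + (p - 1) * t := by
  haveI : Fact p.Prime := ⟨hp⟩
  refine ⟨padicValNat p ((x + y).choose y), ?_⟩
  have hx := legendre hp x
  have hy := legendre hp y
  have hxy := legendre hp (x + y)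
  have hfac : (x + y).choose y * x.factorial * y.factorial = (x + y).factorial :=
    Nat.add_choose_mul_factorial_mul_factorial x y
  have hc : padicValNat p ((x + y).factorial) =
      padicValNat p ((x + y).choose y) + padicValNat p x.factorial
        + padicValNat p y.factorial := by
    rw [← hfac, padicValNat.mul (Nat.mul_ne_zero (Nat.choose_pos (Nat.le_add_left y x)).ne' (Nat.factorial_ne_zero x)) (Nat.factorial_ne_zero y),
      padicValNat.mul (Nat.choose_pos (Nat.le_add_left y x) |>.ne') (Nat.factorial_ne_zero x)]
  have hc' : (p - 1) * padicValNat p ((x + y).factorial) =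
      (p - 1) * padicValNat p ((x + y).choose y) + (p - 1) * padicValNat p x.factorial
        + (p - 1) * padicValNat p y.factorial := by
    rw [hc]; ring
  set A := (p - 1) * padicValNat p ((x + y).factorial) with hA
  set B := (p - 1) * padicValNat p ((x + y).choose y) with hB
  set Cc := (p - 1) * padicValNat p x.factorial with hC
  set D := (p - 1) * padicValNat p y.factorial with hD
  omega

lemma wit_fin {p : ℕ} (hp : p.Prime) {ι : Type*} (s : Finset ι) (f : ι → ℕ) :
    ∃ t, ∑ j ∈ s, dsum p (f j) = dsum p (∑ j ∈ s, f j) + (p - 1) * t := by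
  classical
  induction s using Finset.cons_induction with
  | empty => exact ⟨0, by simp [dsum]⟩
  | cons a s ha IH =>
    obtain ⟨t1, ht1⟩ := IH
    obtain ⟨t2, ht2⟩ := wit2 hp (f a) (∑ j ∈ s, f j)
    refine ⟨t1 + t2, ?_⟩
    rw [Finset.sum_cons, Finset.sum_cons, Nat.mul_add]
    set A := (p - 1) * t1
    set B := (p - 1) * t2
    omega

lemma wit_sum {p : ℕ} (hp : p.Prime) {k : ℕ} (m : Fin k → ℕ) (c : ℕ) :
    ∃ t, (∑ j, dsum p (m j)) + c = dsum p (c + ∑ j, m j) + (p - 1) * t := by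
  obtain ⟨t1, ht1⟩ := wit_fin hp Finset.univ m
  obtain ⟨t2, ht2⟩ := wit2 hp c (∑ j, m j)
  have hl := legendre hp c
  refine ⟨t1 + t2 + padicValNat p c.factorial, ?_⟩
  rw [Nat.mul_add, Nat.mul_add]
  set A := (p - 1) * t1
  set B := (p - 1) * t2
  set Cc := (p - 1) * padicValNat p c.factorial
  omega

/-- the carry-augmented exponent -/
def eps (p : ℕ) {k : ℕ} (m : Fin k → ℕ) (c : ℕ) : ℕ :=
  c + ((∑ j, dsum p (m j)) + c - dsum p (c + ∑ j, m j)) / (p - 1)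

lemma eps_eq {p : ℕ} (hp : 2 ≤ p) {k : ℕ} {m : Fin k → ℕ} {c t : ℕ}
    (h : (∑ j, dsum p (m j)) + c = dsum p (c + ∑ j, m j) + (p - 1) * t) :
    eps p m c = c + t := by
  unfold eps
  rw [h, Nat.add_sub_cancel_left, Nat.mul_div_cancel_left _ (by omega : 0 < p - 1)]

lemma padicValNat_prod {p : ℕ} (hp : p.Prime) {ι : Type*} (s : Finset ι) (f : ι → ℕ)
    (hf : ∀ i ∈ s, f i ≠ 0) :
    padicValNat p (∏ i ∈ s, f i) = ∑ i ∈ s, padicValNat p (f i) := by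
  classical
  haveI : Fact p.Prime := ⟨hp⟩
  induction s using Finset.cons_induction with
  | empty => simp
  | cons a s ha IH =>
    rw [Finset.prod_cons, Finset.sum_cons,
      padicValNat.mul (hf a (Finset.mem_cons_self a s))
        (Finset.prod_ne_zero_iff.2 fun i hi => hf i (Finset.mem_cons_of_mem hi)),
      IH fun i hi => hf i (Finset.mem_cons_of_mem hi)]

lemma eps_zero {p : ℕ} (hp : p.Prime) {k : ℕ} (m : Fin k → ℕ) :
    eps p m 0 = padicValNat p (Nat.multinomial Finset.univ m) := by
  haveI : Fact p.Prime := ⟨hp⟩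
  have hspec := Nat.multinomial_spec Finset.univ m
  have hval : (∑ j, padicValNat p (m j).factorial)
      + padicValNat p (Nat.multinomial Finset.univ m)
      = padicValNat p (∑ j, m j).factorial := by
    rw [← padicValNat_prod hp Finset.univ (fun j => (m j).factorial)
        (fun j _ => Nat.factorial_ne_zero _),
      ← padicValNat.mul (Finset.prod_ne_zero_iff.2 fun j _ => Nat.factorial_ne_zero _)
        (Nat.multinomial_pos _ _).ne', hspec]
  have hsum : ∑ j, m j = (∑ j, dsum p (m j)) + (p - 1) * ∑ j, padicValNat p (m j).factorial := by
    calc ∑ j, m j = ∑ j, (dsum p (m j) + (p - 1) * padicValNat p (m j).factorial) :=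
          Finset.sum_congr rfl fun j _ => legendre hp (m j)
    _ = _ := by rw [Finset.sum_add_distrib, Finset.mul_sum]
  have htot := legendre hp (∑ j, m j)
  have hval' : (p - 1) * (∑ j, padicValNat p (m j).factorial)
      + (p - 1) * padicValNat p (Nat.multinomial Finset.univ m)
      = (p - 1) * padicValNat p (∑ j, m j).factorial := by
    rw [← Nat.mul_add, hval]
  have h : (∑ j, dsum p (m j)) + 0 = dsum p (0 + ∑ j, m j)
      + (p - 1) * padicValNat p (Nat.multinomial Finset.univ m) := by
    rw [Nat.add_zero, Nat.zero_add]
    set A := (p - 1) * ∑ j, padicValNat p (m j).factorial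
    set B := (p - 1) * padicValNat p (Nat.multinomial Finset.univ m)
    set Cc := (p - 1) * padicValNat p (∑ j, m j).factorial
    omega
  simpa using eps_eq hp.two_le h

lemma dsum_shift {p : ℕ} (hp : 2 ≤ p) {a b : ℕ} (ha : a < p) :
    dsum p (a + p * b) = a + dsum p b := by
  rcases Nat.eq_zero_or_pos (a + p * b) with h | h
  · have ha0 : a = 0 := by omega
    have hb0 : b = 0 := by
      rcases Nat.mul_eq_zero.1 (by omega : p * b = 0) with h' | h' <;> omega
    simp [ha0, hb0, dsum]
  · unfold dsum
    rw [Nat.digits_def' (by omega : 1 < p) h, List.sum_cons,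
      Nat.add_mul_mod_self_left, Nat.mod_eq_of_lt ha,
      Nat.add_mul_div_left _ _ (by omega : 0 < p), Nat.div_eq_of_lt ha, Nat.zero_add]

lemma eps_rec {p : ℕ} (hp : p.Prime) {k : ℕ} (a b : Fin k → ℕ) (ha : ∀ t, a t < p) (i : ℕ) :
    eps p (fun t => a t + p * b t) i = i + eps p b (((∑ t, a t) + i) / p) := by
  have h2 : 2 ≤ p := hp.two_le
  set A := ∑ t, a t with hA
  set j := (A + i) / p with hj
  obtain ⟨t, ht⟩ := wit_sum hp b j
  rw [eps_eq h2 ht]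
  have hdm : p * j + (A + i) % p = A + i := Nat.div_add_mod _ _
  set d' := (A + i) % p with hd'
  have hd'lt : d' < p := Nat.mod_lt _ (by omega)
  apply eps_eq h2
  have h1 : ∑ tt, dsum p (a tt + p * b tt) = A + ∑ tt, dsum p (b tt) := by
    rw [Finset.sum_congr rfl (fun tt _ => dsum_shift h2 (ha tt)), Finset.sum_add_distrib]
  have h3 : i + ∑ tt, (a tt + p * b tt) = d' + p * (j + ∑ tt, b tt) := by
    rw [Finset.sum_add_distrib, ← Finset.mul_sum, Nat.mul_add]
    set X1 := p * ∑ tt, b tt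
    omega
  have h4 : dsum p (i + ∑ tt, (a tt + p * b tt)) = d' + dsum p (j + ∑ tt, b tt) := by
    rw [h3, dsum_shift h2 hd'lt]
  rw [h1, h4]
  have e1 : (p - 1) * (j + t) = (p - 1) * j + (p - 1) * t := Nat.mul_add _ _ _
  have e2 : (p - 1) * j + j = p * j := by
    rw [Nat.sub_one_mul]
    have : j ≤ p * j := Nat.le_mul_of_pos_left j (by omega)
    omega
  set X1 := (p - 1) * (j + t)
  set X2 := (p - 1) * j
  set X3 := (p - 1) * t
  set X4 := p * j
  omega


lemma eps_zero_zero (p : ℕ) {k : ℕ} : eps p (fun _ : Fin k => 0) 0 = 0 := by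
  simp [eps, dsum]

lemma cpk_card (p k i d j : ℕ) :
    cpk p k ((p : ℤ) * (j : ℕ) + (d : ℕ) - (i : ℕ)) =
    ((Fintype.piFinset fun _ : Fin k => Finset.range p).filter
      (fun a => (∑ t, a t) + i = d + p * j)).card := by
  unfold cpk
  congr 1
  apply Finset.filter_congr
  intro a _
  have : (∑ t, (a t : ℤ)) = ((∑ t, a t : ℕ) : ℤ) := by push_cast; ring
  rw [this]
  constructor <;> intro h <;> omega

lemma jlt {p k i : ℕ} (hp : 2 ≤ p) (hi : i < k) (m : Fin k → ℕ) :
    ((∑ t, m t % p) + i) / p < k := by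
  have hS : (∑ t, m t % p) ≤ k * (p - 1) := by
    calc (∑ t, m t % p) ≤ ∑ _t : Fin k, (p - 1) :=
          Finset.sum_le_sum fun t _ => by
            have := Nat.mod_lt (m t) (show 0 < p by omega); omega
    _ = k * (p - 1) := by simp [Finset.sum_const, Finset.card_univ, Nat.smul_one_eq_cast]
  rw [Nat.div_lt_iff_lt_mul (by omega : 0 < p)]
  have hkp : k * (p - 1) + k = k * p := by
    rw [Nat.mul_sub, Nat.mul_one]
    have : k ≤ k * p := Nat.le_mul_of_pos_right k (by omega)
    omega
  set A := k * (p - 1)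
  set B := k * p
  omega

lemma main (p : ℕ) (hp : p.Prime) (k : ℕ) (hk : 0 < k) :
    ∀ n : ℕ, ∀ i : ℕ, ∀ hi : i < k,
    (((Nat.digits p n).map (Mpk p k)).prod) ⟨i, hi⟩ ⟨0, hk⟩ =
      ∑ m ∈ (Fintype.piFinset fun _ : Fin k => Finset.range (n + 1)).filter
        (fun m => (∑ t, m t) + i = n), X ^ eps p m i := by
  intro n
  induction n using Nat.strong_induction_on with
  | _ n IH =>
  intro i hi
  rcases Nat.eq_zero_or_pos n with rfl | hn
  · simp only [Nat.digits_zero, List.map_nil, List.prod_nil, Matrix.one_apply]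
    rcases Nat.eq_zero_or_pos i with rfl | hipos
    · rw [if_pos rfl]
      have hset : ((Fintype.piFinset fun _ : Fin k => Finset.range (0 + 1)).filter
          (fun m => (∑ t, m t) + 0 = 0)) = {fun _ => 0} := by
        ext m
        simp only [Finset.mem_filter, Fintype.mem_piFinset, Finset.mem_range,
          Finset.mem_singleton]
        constructor
        · rintro ⟨h1, h2⟩
          funext t
          have h3 : ∑ t, m t = 0 := by omega
          exact Finset.sum_eq_zero_iff.1 h3 t (Finset.mem_univ t)
        · rintro rfl
          exact ⟨fun t => by simp, by simp⟩
      rw [hset, Finset.sum_singleton, eps_zero_zero, pow_zero]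
    · rw [if_neg (by intro h; exact absurd (Fin.mk.inj_iff.1 h) (by omega))]
      symm
      apply Finset.sum_eq_zero
      intro m hm
      rw [Finset.mem_filter] at hm
      omega
  · have h2 := hp.two_le
    rw [Nat.digits_def' (by omega : 1 < p) hn, List.map_cons, List.prod_cons, Matrix.mul_apply]
    set d := n % p with hdd
    set n' := n / p with hn'
    have hdlt : d < p := by rw [hdd]; exact Nat.mod_lt _ (by omega)
    have hdn : p * n' + d = n := by rw [hdd, hn']; exact Nat.div_add_mod n p
    have hIH : ∀ j : Fin k, (((Nat.digits p n').map (Mpk p k)).prod) j ⟨0, hk⟩ =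
        ∑ b ∈ (Fintype.piFinset fun _ : Fin k => Finset.range (n' + 1)).filter
          (fun b => (∑ t, b t) + (j : ℕ) = n'), X ^ eps p b (j : ℕ) := by
      intro j
      have h := IH n' (by rw [hn']; exact Nat.div_lt_self hn (by omega)) (j : ℕ) j.isLt
      rwa [Fin.eta] at h
    have hterm : ∀ j : Fin k,
        Mpk p k d ⟨i, hi⟩ j * (((Nat.digits p n').map (Mpk p k)).prod) j ⟨0, hk⟩ =
        ∑ a ∈ (Fintype.piFinset fun _ : Fin k => Finset.range p),
          ∑ b ∈ (Fintype.piFinset fun _ : Fin k => Finset.range (n' + 1)),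
            if ((∑ t, a t) + i = d + p * (j : ℕ) ∧ (∑ t, b t) + (j : ℕ) = n')
            then (X : Polynomial ℤ) ^ (i + eps p b (j : ℕ)) else 0 := by
      intro j
      rw [hIH j]
      have hM : Mpk p k d ⟨i, hi⟩ j =
          C ((((Fintype.piFinset fun _ : Fin k => Finset.range p).filter
            (fun a => (∑ t, a t) + i = d + p * (j : ℕ))).card : ℤ)) * X ^ i := by
        rw [Mpk]
        simp only [Matrix.of_apply]
        rw [cpk_card p k i d (j : ℕ)]
      rw [hM]
      have hR : ∀ a : Fin k → ℕ,
          (∑ b ∈ (Fintype.piFinset fun _ : Fin k => Finset.range (n' + 1)),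
            if ((∑ t, a t) + i = d + p * (j : ℕ) ∧ (∑ t, b t) + (j : ℕ) = n')
            then (X : Polynomial ℤ) ^ (i + eps p b (j : ℕ)) else 0) =
          if ((∑ t, a t) + i = d + p * (j : ℕ)) then
            (∑ b ∈ (Fintype.piFinset fun _ : Fin k => Finset.range (n' + 1)).filter
              (fun b => (∑ t, b t) + (j : ℕ) = n'), (X : Polynomial ℤ) ^ (i + eps p b (j : ℕ))) else 0 := by
        intro a
        by_cases hP : (∑ t, a t) + i = d + p * (j : ℕ)
        · rw [if_pos hP, Finset.sum_filter]
          exact Finset.sum_congr rfl fun b _ => by simp [hP]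
        · rw [if_neg hP]
          exact Finset.sum_eq_zero fun b _ => by simp [hP]
      have hstep : (∑ a ∈ (Fintype.piFinset fun _ : Fin k => Finset.range p),
          ∑ b ∈ (Fintype.piFinset fun _ : Fin k => Finset.range (n' + 1)),
            if ((∑ t, a t) + i = d + p * (j : ℕ) ∧ (∑ t, b t) + (j : ℕ) = n')
            then (X : Polynomial ℤ) ^ (i + eps p b (j : ℕ)) else 0) =
          ∑ a ∈ (Fintype.piFinset fun _ : Fin k => Finset.range p),
            if ((∑ t, a t) + i = d + p * (j : ℕ)) then
              (∑ b ∈ (Fintype.piFinset fun _ : Fin k => Finset.range (n' + 1)).filter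
                (fun b => (∑ t, b t) + (j : ℕ) = n'), (X : Polynomial ℤ) ^ (i + eps p b (j : ℕ))) else 0 :=
        Finset.sum_congr rfl fun a _ => hR a
      rw [hstep, ← Finset.sum_filter, Finset.sum_const,
        nsmul_eq_mul, Polynomial.C_eq_natCast, mul_assoc, Finset.mul_sum]
      exact congrArg _ (Finset.sum_congr rfl fun b _ => (pow_add (X : Polynomial ℤ) i _).symm)
    have hstep2 : (∑ j : Fin k, Mpk p k d ⟨i, hi⟩ j *
          (((Nat.digits p n').map (Mpk p k)).prod) j ⟨0, hk⟩) =
        ∑ j : Fin k, ∑ a ∈ (Fintype.piFinset fun _ : Fin k => Finset.range p),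
          ∑ b ∈ (Fintype.piFinset fun _ : Fin k => Finset.range (n' + 1)),
            if ((∑ t, a t) + i = d + p * (j : ℕ) ∧ (∑ t, b t) + (j : ℕ) = n')
            then (X : Polynomial ℤ) ^ (i + eps p b (j : ℕ)) else 0 :=
      Finset.sum_congr rfl fun j _ => hterm j
    rw [hstep2]
    have hS' : (∑ x ∈ (((Finset.univ : Finset (Fin k)) ×ˢ
          ((Fintype.piFinset fun _ : Fin k => Finset.range p) ×ˢ
           (Fintype.piFinset fun _ : Fin k => Finset.range (n' + 1)))).filter
          (fun x => (∑ t, x.2.1 t) + i = d + p * (x.1 : ℕ) ∧ (∑ t, x.2.2 t) + (x.1 : ℕ) = n')),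
          (X : Polynomial ℤ) ^ (i + eps p x.2.2 (x.1 : ℕ))) =
        ∑ j : Fin k, ∑ a ∈ (Fintype.piFinset fun _ : Fin k => Finset.range p),
          ∑ b ∈ (Fintype.piFinset fun _ : Fin k => Finset.range (n' + 1)),
            if ((∑ t, a t) + i = d + p * (j : ℕ) ∧ (∑ t, b t) + (j : ℕ) = n')
            then (X : Polynomial ℤ) ^ (i + eps p b (j : ℕ)) else 0 := by
      rw [Finset.sum_filter, Finset.sum_product]
      exact Finset.sum_congr rfl fun j _ => by rw [Finset.sum_product]
    rw [← hS']
    refine Finset.sum_nbij' (i := fun x => fun t => x.2.1 t + p * x.2.2 t)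
      (j := fun m => (⟨((∑ t, m t % p) + i) / p, jlt h2 hi m⟩,
        fun t => m t % p, fun t => m t / p)) ?_ ?_ ?_ ?_ ?_
    · intro x hx
      simp only [Finset.mem_filter, Finset.mem_product, Fintype.mem_piFinset,
        Finset.mem_range] at hx
      obtain ⟨⟨-, ha, hb⟩, hc1, hc2⟩ := hx
      have htot : (∑ t, (x.2.1 t + p * x.2.2 t)) + i = n := by
        rw [Finset.sum_add_distrib, ← Finset.mul_sum]
        have e1 : p * ((∑ t, x.2.2 t) + (x.1 : ℕ)) = p * (∑ t, x.2.2 t) + p * (x.1 : ℕ) :=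
          Nat.mul_add _ _ _
        have e2 : p * ((∑ t, x.2.2 t) + (x.1 : ℕ)) = p * n' := by rw [hc2]
        set A := p * ∑ t, x.2.2 t
        set B := p * (x.1 : ℕ)
        set Cc := p * n'
        set D := p * ((∑ t, x.2.2 t) + (x.1 : ℕ))
        omega
      simp only [Finset.mem_filter, Fintype.mem_piFinset, Finset.mem_range]
      refine ⟨fun t => ?_, htot⟩
      have hle : x.2.1 t + p * x.2.2 t ≤ ∑ tt, (x.2.1 tt + p * x.2.2 tt) :=
        Finset.single_le_sum (f := fun tt => x.2.1 tt + p * x.2.2 tt)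
          (fun tt _ => Nat.zero_le _) (Finset.mem_univ t)
      show x.2.1 t + p * x.2.2 t < n + 1
      omega
    · intro m hm
      simp only [Finset.mem_filter, Fintype.mem_piFinset, Finset.mem_range] at hm
      obtain ⟨hmr, hms⟩ := hm
      have hsplit : ∑ t, m t = p * (∑ t, m t / p) + (∑ t, m t % p) := by
        rw [Finset.mul_sum, ← Finset.sum_add_distrib]
        exact Finset.sum_congr rfl fun t _ => (Nat.div_add_mod (m t) p).symm
      have hn2 : p * (∑ t, m t / p) + ((∑ t, m t % p) + i) = n := by omega
      have hdm : p * (((∑ t, m t % p) + i) / p) + ((∑ t, m t % p) + i) % p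
          = (∑ t, m t % p) + i := Nat.div_add_mod _ _
      have hmod : ((∑ t, m t % p) + i) % p = d := by
        rw [hdd, ← hn2, Nat.mul_add_mod]
      have hdiv : (∑ t, m t / p) + ((∑ t, m t % p) + i) / p = n' := by
        rw [hn', ← hn2, Nat.mul_add_div (by omega : 0 < p)]
      simp only [Finset.mem_filter, Finset.mem_product, Fintype.mem_piFinset,
        Finset.mem_range, Finset.mem_univ, true_and]
      refine ⟨⟨fun t => Nat.mod_lt _ (by omega), fun t => ?_⟩, ?_, ?_⟩
      · have hle : m t ≤ ∑ tt, m tt :=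
          Finset.single_le_sum (fun tt _ => Nat.zero_le _) (Finset.mem_univ t)
        have hdd2 : m t / p ≤ n' := by rw [hn']; exact Nat.div_le_div_right (by omega)
        omega
      · show (∑ t, m t % p) + i = d + p * (((∑ t, m t % p) + i) / p)
        omega
      · show (∑ t, m t / p) + ((∑ t, m t % p) + i) / p = n'
        exact hdiv
    · intro x hx
      simp only [Finset.mem_filter, Finset.mem_product, Fintype.mem_piFinset,
        Finset.mem_range] at hx
      obtain ⟨⟨-, ha, hb⟩, hc1, hc2⟩ := hx
      have hmod : ∀ t, (x.2.1 t + p * x.2.2 t) % p = x.2.1 t := fun t => by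
        rw [Nat.add_mul_mod_self_left, Nat.mod_eq_of_lt (ha t)]
      have hdivt : ∀ t, (x.2.1 t + p * x.2.2 t) / p = x.2.2 t := fun t => by
        rw [Nat.add_mul_div_left _ _ (by omega : 0 < p), Nat.div_eq_of_lt (ha t), Nat.zero_add]
      have hsum1 : (∑ t, (x.2.1 t + p * x.2.2 t) % p) = ∑ t, x.2.1 t :=
        Finset.sum_congr rfl fun t _ => hmod t
      have hj : ((∑ t, (x.2.1 t + p * x.2.2 t) % p) + i) / p = (x.1 : ℕ) := by
        rw [hsum1, hc1, Nat.add_mul_div_left _ _ (by omega : 0 < p),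
          Nat.div_eq_of_lt hdlt, Nat.zero_add]
      refine Prod.ext (Fin.ext ?_) (Prod.ext ?_ ?_)
      · exact hj
      · funext t; exact hmod t
      · funext t; exact hdivt t
    · intro m hm
      funext t
      exact Nat.mod_add_div (m t) p
    · intro x hx
      simp only [Finset.mem_filter, Finset.mem_product, Fintype.mem_piFinset,
        Finset.mem_range] at hx
      obtain ⟨⟨-, ha, hb⟩, hc1, hc2⟩ := hx
      have hjj : ((∑ t, x.2.1 t) + i) / p = (x.1 : ℕ) := by
        rw [hc1, Nat.add_mul_div_left _ _ (by omega : 0 < p),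
          Nat.div_eq_of_lt hdlt, Nat.zero_add]
      rw [eps_rec hp x.2.1 x.2.2 ha i, hjj]

end TpkAux

theorem Tpk_matrix_product (p : ℕ) (hp : p.Prime) (k : ℕ) (hk : 0 < k) (n : ℕ) :
    Tpk p k n =
      (((Nat.digits p n).map (Mpk p k)).prod) ⟨0, hk⟩ ⟨0, hk⟩ := by
  rw [TpkAux.main p hp k hk n 0 hk]
  simp only [Tpk]
  have hfil : ((Fintype.piFinset fun _ : Fin k => Finset.range (n + 1)).filter
      (fun m => (∑ t, m t) + 0 = n)) =
      ((Fintype.piFinset fun _ : Fin k => Finset.range (n + 1)).filter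
      (fun m => ∑ i, m i = n)) := by
    apply Finset.filter_congr
    intro m _
    simp
  rw [hfil]
  exact Finset.sum_congr rfl fun m _ => by rw [TpkAux.eps_zero hp m]
end

section
/- Let p be a prime, k ≥ 1, and n ≥ 0 with standard base-p digits n_0, …, n_ℓ. Then the number of k-tuples m ∈ ℕ^k with m_1 + ⋯ + m_k = n such that p does not divide the multinomial coefficient n! / (m_1!⋯m_k!) equals ∏_{i=0}^{ℓ} C(n_i + k − 1, k − 1). -/
/-!
Legendre's formula in the form `v_p(n!) = ⌊n/p⌋ + v_p(⌊n/p⌋!)` shows that, for `∑ mᵢ = n`,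
`v_p` of the multinomial coefficient of `m` is `⌊n/p⌋ - ∑ ⌊mᵢ/p⌋` plus a nonnegative term plus
`v_p` of the multinomial coefficient of `⌊m/p⌋`. So `p` does not divide it iff the last digits
`mᵢ mod p` add up to `n mod p` without a carry and `p` does not divide the multinomial coefficient
of `⌊m/p⌋`. Hence `m ↦ (m mod p, ⌊m/p⌋)` matches the tuples counted for `n` with pairs of a
composition of the last digit `n₀` (stars and bars: `C(n₀ + k - 1, k - 1)` of them) and a tuple
counted for `⌊n/p⌋`, and the product formula follows by induction on the digits.
-/

open Finset Nat

theorem Finset.sum_div_le_div_sum {ι : Type*} (s : Finset ι) (f : ι → ℕ) (p : ℕ) :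
    ∑ i ∈ s, f i / p ≤ (∑ i ∈ s, f i) / p := by
  rcases p.eq_zero_or_pos with rfl | hp
  · simp
  rw [Nat.le_div_iff_mul_le hp, sum_mul]
  exact sum_le_sum fun i _ => Nat.div_mul_le_self (f i) p

theorem Finset.sum_mod_add_mul_sum_div {ι : Type*} (s : Finset ι) (f : ι → ℕ) (p : ℕ) :
    ∑ i ∈ s, f i % p + p * ∑ i ∈ s, f i / p = ∑ i ∈ s, f i := by
  rw [mul_sum, ← sum_add_distrib]
  exact sum_congr rfl fun i _ => mod_add_div (f i) p

theorem lt_of_sum_eq_mod {ι : Type*} [Fintype ι] {r : ι → ℕ} {n p : ℕ} (hp : 0 < p)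
    (hr : ∑ i, r i = n % p) (i : ι) : r i < p :=
  (single_le_sum (fun j _ => Nat.zero_le (r j)) (mem_univ i)).trans_lt (hr ▸ mod_lt n hp)

section Valuation

variable {p : ℕ} [Fact p.Prime]

protected theorem padicValNat.prod {ι : Type*} (s : Finset ι) {f : ι → ℕ}
    (hf : ∀ i ∈ s, f i ≠ 0) : padicValNat p (∏ i ∈ s, f i) = ∑ i ∈ s, padicValNat p (f i) := by
  classical
  induction s using Finset.induction_on with
  | empty => simp
  | insert a s ha ih =>
    rw [prod_insert ha, sum_insert ha, padicValNat.mul (hf a (mem_insert_self a s))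
      (prod_ne_zero_iff.mpr fun i hi => hf i (mem_insert_of_mem hi)),
      ih fun i hi => hf i (mem_insert_of_mem hi)]

theorem padicValNat_le_of_dvd {a b : ℕ} (hb : b ≠ 0) (hab : a ∣ b) :
    padicValNat p a ≤ padicValNat p b :=
  (padicValNat_dvd_iff_le hb).mp (pow_padicValNat_dvd.trans hab)

theorem padicValNat_factorial_eq_div_add (n : ℕ) :
    padicValNat p n ! = n / p + padicValNat p (n / p)! := by
  rw [← padicValNat_mul_div_factorial, padicValNat_factorial_mul, add_comm]

theorem padicValNat_multinomial_add_sum {ι : Type*} (s : Finset ι) (f : ι → ℕ) :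
    padicValNat p (multinomial s f) + ∑ i ∈ s, padicValNat p (f i)! =
      padicValNat p (∑ i ∈ s, f i)! := by
  rw [← multinomial_spec s f, padicValNat.mul (prod_ne_zero_iff.mpr fun i _ => factorial_ne_zero _)
    (multinomial_pos s f).ne', padicValNat.prod s fun i _ => factorial_ne_zero _, add_comm]

theorem not_dvd_multinomial_iff {ι : Type*} (s : Finset ι) (f : ι → ℕ) :
    ¬ p ∣ multinomial s f ↔
      ∑ i ∈ s, f i / p = (∑ i ∈ s, f i) / p ∧ ¬ p ∣ multinomial s (fun i => f i / p) := by
  have hM := padicValNat_multinomial_add_sum (p := p) s f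
  have hQ := padicValNat_multinomial_add_sum (p := p) s (fun i => f i / p)
  simp only [padicValNat_factorial_eq_div_add (f _), sum_add_distrib,
    padicValNat_factorial_eq_div_add (∑ i ∈ s, f i)] at hM
  have hle := sum_div_le_div_sum s f p
  have hmono : padicValNat p (∑ i ∈ s, f i / p)! ≤ padicValNat p ((∑ i ∈ s, f i) / p)! :=
    padicValNat_le_of_dvd (factorial_ne_zero _) (factorial_dvd_factorial hle)
  simp only [dvd_iff_padicValNat_ne_zero (multinomial_pos _ _).ne', not_not]
  constructor
  · intro h
    omega
  · rintro ⟨hsum, hM'⟩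
    rw [hsum] at hQ
    omega

end Valuation

theorem Finset.Nat.card_antidiagonalTuple_succ (k n : ℕ) :
    #(antidiagonalTuple (k + 1) n) = (n + k).choose k := by
  rw [card_eq_of_equiv_fintype ((Equiv.subtypeEquivRight fun _ => mem_antidiagonalTuple).trans
    (Sym.equivNatSumOfFintype _ _).symm), Sym.card_sym_eq_choose, Fintype.card_fin,
    add_right_comm, Nat.add_sub_cancel, add_comm, choose_symm_add]

theorem Finset.Nat.filter_piFinset_range_sum_eq (k n : ℕ) :
    {m ∈ Fintype.piFinset fun _ : Fin k => range (n + 1) | ∑ i, m i = n} =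
      antidiagonalTuple k n := by
  ext m
  simp only [mem_filter, Fintype.mem_piFinset, mem_range, mem_antidiagonalTuple,
    and_iff_right_iff_imp]
  rintro rfl i
  exact Nat.lt_succ_of_le (single_le_sum (fun j _ => Nat.zero_le (m j)) (mem_univ i))

theorem card_filter_not_dvd_multinomial_eq_mul {p : ℕ} [hp : Fact p.Prime] (k n : ℕ) :
    #{m ∈ antidiagonalTuple k n | ¬ p ∣ multinomial univ m} =
      #(antidiagonalTuple k (n % p)) *
        #{m ∈ antidiagonalTuple k (n / p) | ¬ p ∣ multinomial univ m} := by
  rw [← card_product]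
  have hp0 := hp.out.pos
  refine card_nbij' (fun m => (fun i => m i % p, fun i => m i / p))
    (fun rq i => rq.1 i + p * rq.2 i) ?_ ?_ ?_ ?_
  · intro m hm
    simp only [mem_coe, mem_filter, mem_product, mem_antidiagonalTuple] at hm ⊢
    obtain ⟨hsum, hdvd⟩ := hm
    obtain ⟨hdiv, hdvd'⟩ := (not_dvd_multinomial_iff univ m).mp hdvd
    rw [hsum] at hdiv
    refine ⟨Nat.add_right_cancel (m := p * (n / p)) ?_, hdiv, hdvd'⟩
    rw [← hdiv, sum_mod_add_mul_sum_div, hdiv, hsum, mod_add_div]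
  · rintro ⟨r, q⟩ hrq
    simp only [mem_coe, mem_filter, mem_product, mem_antidiagonalTuple] at hrq ⊢
    obtain ⟨hr, hq, hdvd⟩ := hrq
    have hdiv (i : Fin k) : (r i + p * q i) / p = q i := by
      rw [Nat.add_mul_div_left _ _ hp0, div_eq_of_lt (lt_of_sum_eq_mod hp0 hr i), zero_add]
    have hsum : ∑ i, (r i + p * q i) = n := by
      rw [sum_add_distrib, ← mul_sum, hr, hq, mod_add_div]
    refine ⟨hsum, (not_dvd_multinomial_iff univ _).mpr ⟨?_, ?_⟩⟩
    · simp only [hdiv, hq, hsum]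
    · simpa only [hdiv] using hdvd
  · intro m _
    funext i
    exact mod_add_div (m i) p
  · rintro ⟨r, q⟩ hrq
    simp only [mem_coe, mem_filter, mem_product, mem_antidiagonalTuple] at hrq
    have hlt := lt_of_sum_eq_mod hp0 hrq.1
    ext i
    · simp only [add_mul_mod_self_left, mod_eq_of_lt (hlt i)]
    · simp only [Nat.add_mul_div_left _ _ hp0, div_eq_of_lt (hlt i), zero_add]

theorem fine_multinomial (p : ℕ) (hp : p.Prime) (k : ℕ) (hk : 1 ≤ k) (n : ℕ) :
    (((Fintype.piFinset fun _ : Fin k => Finset.range (n + 1)).filter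
        fun m => (∑ i, m i = n) ∧ ¬ p ∣ Nat.multinomial Finset.univ m).card) =
      ((Nat.digits p n).map fun a => (a + k - 1).choose (k - 1)).prod := by
  have := Fact.mk hp
  obtain ⟨k, rfl⟩ := Nat.exists_eq_add_of_le' hk
  simp only [← filter_filter, Finset.Nat.filter_piFinset_range_sum_eq, ← add_assoc,
    add_tsub_cancel_right]
  induction n using Nat.strong_induction_on with
  | _ n ih =>
  rcases n.eq_zero_or_pos with rfl | hn
  · simp [antidiagonalTuple_zero_right, filter_singleton, multinomial, hp.not_dvd_one]
  · rw [card_filter_not_dvd_multinomial_eq_mul, ih _ (div_lt_self hn hp.one_lt),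
      card_antidiagonalTuple_succ, digits_def' hp.one_lt hn, List.map_cons, List.prod_cons,
      mul_comm]
end

section
/- Let p be a prime, k ≥ 1, n ≥ 0, d ∈ {0,…,p−1}, and 0 ≤ i ≤ k − 1. Define T_{p,k,i}(n, x) = 0 if n < i and x^{ν_p(n!/(n−i)!) + i}·T_{p,k}(n − i, x) otherwise, where T_{p,k}(n, x) = Σ_{m ∈ ℕ^k, total(m) = n} x^{ν_p(mult(m))}. Then T_{p,k,i}(p·n + d, x) = Σ_{j=0}^{k−1} c_{p,k}(p·j + d − i)·x^i·T_{p,k,j}(n, x). -/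
open Polynomial

/-- `Tpki p k i n = 0` if `n < i`, and `x^{ν_p(n!/(n−i)!) + i}·T_{p,k}(n − i, x)` otherwise. -/
noncomputable def Tpki (p k i n : ℕ) : Polynomial ℤ :=
  if n < i then 0
  else X ^ (padicValNat p (n.descFactorial i) + i) * Tpk p k (n - i)

variable {p : ℕ} [hfp : Fact p.Prime]

lemma valFact_mul_add {n d : ℕ} (hd : d < p) :
    padicValNat p (Nat.factorial (p * n + d)) = n + padicValNat p (Nat.factorial n) := by
  rw [padicValNat_factorial_mul_add n hd, padicValNat_factorial_mul]
  omega

lemma padicValNat_prod {α : Type*} (s : Finset α) (f : α → ℕ) (hf : ∀ a ∈ s, f a ≠ 0) :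
    padicValNat p (∏ a ∈ s, f a) = ∑ a ∈ s, padicValNat p (f a) := by
  classical
  induction s using Finset.cons_induction with
  | empty => simp
  | cons a s ha ih =>
    rw [Finset.prod_cons, Finset.sum_cons, padicValNat.mul (hf a (Finset.mem_cons_self a s))
      (Finset.prod_ne_zero_iff.2 fun b hb => hf b (Finset.mem_cons_of_mem hb)),
      ih fun b hb => hf b (Finset.mem_cons_of_mem hb)]

lemma valMult {k : ℕ} (m : Fin k → ℕ) :
    padicValNat p (Nat.multinomial Finset.univ m) + ∑ t, padicValNat p (Nat.factorial (m t)) =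
      padicValNat p (Nat.factorial (∑ t, m t)) := by
  have h := Nat.multinomial_spec Finset.univ m
  have := congrArg (padicValNat p) h
  rw [padicValNat.mul (Finset.prod_ne_zero_iff.2 fun b _ => Nat.factorial_ne_zero _)
      (Nat.multinomial_pos _ _).ne',
    padicValNat_prod _ _ fun b _ => Nat.factorial_ne_zero _] at this
  omega

lemma valDesc {n j : ℕ} (hj : j ≤ n) :
    padicValNat p (n.descFactorial j) + padicValNat p (Nat.factorial (n - j)) =
      padicValNat p (Nat.factorial n) := by
  have h := Nat.factorial_mul_descFactorial hj
  have := congrArg (padicValNat p) h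
  rw [padicValNat.mul (Nat.factorial_ne_zero _)
      (by simp [Nat.descFactorial_eq_zero_iff_lt]; omega)] at this
  omega

lemma cpk_natCast (p k N : ℕ) :
    cpk p k (N : ℤ) = ((Fintype.piFinset fun _ : Fin k => Finset.range p).filter
      fun r => (∑ i, r i) = N).card := by
  unfold cpk
  congr 1
  apply Finset.filter_congr
  intro r _
  rw [← Nat.cast_sum]
  exact Nat.cast_inj

lemma cpk_neg (p k : ℕ) {z : ℤ} (hz : z < 0) : cpk p k z = 0 := by
  unfold cpk
  rw [Finset.card_eq_zero, Finset.filter_eq_empty_iff]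
  intro r _ h
  have : (0 : ℤ) ≤ ∑ i, (r i : ℤ) := Finset.sum_nonneg fun i _ => by positivity
  omega

lemma cpk_big (p k : ℕ) {N : ℕ} (hp : 1 ≤ p) (hz : k * (p - 1) < N) : cpk p k (N : ℤ) = 0 := by
  rw [cpk_natCast]
  rw [Finset.card_eq_zero, Finset.filter_eq_empty_iff]
  intro r hr h
  have hb : ∀ t, r t ≤ p - 1 := by
    intro t
    have := (Fintype.mem_piFinset.1 hr) t
    simp only [Finset.mem_range] at this
    omega
  have : (∑ t, r t) ≤ ∑ _t : Fin k, (p - 1) := Finset.sum_le_sum fun t _ => hb t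
  simp only [Finset.sum_const, Finset.card_univ, Fintype.card_fin, smul_eq_mul] at this
  omega

lemma Tpk_eq (p k n : ℕ) :
    Tpk p k n = ∑ m ∈ Finset.Nat.antidiagonalTuple k n,
      X ^ padicValNat p (Nat.multinomial Finset.univ m) := by
  unfold Tpk
  apply Finset.sum_congr _ fun _ _ => rfl
  ext m
  simp only [Finset.mem_filter, Fintype.mem_piFinset, Finset.mem_range,
    Finset.Nat.mem_antidiagonalTuple]
  constructor
  · exact fun h => h.2
  · intro h
    refine ⟨fun t => ?_, h⟩
    have : m t ≤ ∑ i, m i := Finset.single_le_sum (fun i _ => Nat.zero_le _) (Finset.mem_univ t)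
    omega

/-- Key facts about the digit decomposition of a tuple summing to `p*n+d`. -/
lemma decomp_facts {k n d : ℕ} (hk : 1 ≤ k) (hd : d < p) (m : Fin k → ℕ)
    (hm : ∑ t, m t = p * n + d) :
    (∑ t, m t / p) ≤ n ∧ n - (∑ t, m t / p) < k ∧
      ∑ t, m t % p = p * (n - (∑ t, m t / p)) + d := by
  have hp1 : 1 < p := hfp.out.one_lt
  have hsplit : ∑ t, m t = p * (∑ t, m t / p) + ∑ t, m t % p := by
    rw [Finset.mul_sum, ← Finset.sum_add_distrib]
    exact Finset.sum_congr rfl fun t _ => (Nat.div_add_mod (m t)  p).symm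
  set A := ∑ t, m t / p with hA
  set S := ∑ t, m t % p with hS
  have hSd : S < p * k ∨ True := Or.inr trivial
  have hSle : S ≤ k * (p - 1) := by
    have h1 : ∀ t ∈ Finset.univ (α := Fin k), m t % p ≤ p - 1 := fun t _ => by
      have := Nat.mod_lt (m t) (by omega : 0 < p); omega
    have h2 := Finset.sum_le_sum h1
    simpa only [Finset.sum_const, Finset.card_univ, Fintype.card_fin, smul_eq_mul] using h2
  have hAn : A ≤ n := by
    by_contra hc
    push_neg at hc
    have h1 : p * (n + 1) ≤ p * A := Nat.mul_le_mul_left p hc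
    have h2 : p * (n + 1) = p * n + p := by ring
    omega
  obtain ⟨q, hq⟩ : ∃ q, n = A + q := ⟨n - A, by omega⟩
  have hdist : p * (A + q) = p * A + p * q := Nat.mul_add p A q
  have hpn : p * n = p * (A + q) := by rw [← hq]
  have hSq : S = p * q + d := by omega
  have hqk : q < k := by
    by_contra hc
    push_neg at hc
    have h1 : p * k ≤ p * q := Nat.mul_le_mul_left p hc
    have h2 : p * k = k * p := Nat.mul_comm p k
    have h3 : k * (p - 1) + k = k * p := by
      cases p with
      | zero => omega
      | succ p' => simp [Nat.mul_succ]
    omega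
  have hnA : n - A = q := by omega
  have hfin : p * (n - A) = p * q := by rw [hnA]
  exact ⟨hAn, by omega, by omega⟩

lemma val_mult_decompose {k n d j : ℕ} (hd : d < p) (hj : j ≤ n)
    (m a r : Fin k → ℕ) (hm : ∀ t, m t = p * a t + r t) (hr : ∀ t, r t < p)
    (hmsum : ∑ t, m t = p * n + d) (hrsum : ∑ t, r t = p * j + d) :
    padicValNat p (Nat.multinomial Finset.univ m) =
      padicValNat p (n.descFactorial j) + j + padicValNat p (Nat.multinomial Finset.univ a) := by
  have hp1 : 1 ≤ p := hfp.out.one_le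
  have hsplit : ∑ t, m t = p * (∑ t, a t) + ∑ t, r t := by
    rw [Finset.mul_sum, ← Finset.sum_add_distrib]
    exact Finset.sum_congr rfl fun t _ => hm t
  have hasum : ∑ t, a t = n - j := by
    obtain ⟨q, hq⟩ : ∃ q, n = j + q := ⟨n - j, by omega⟩
    have hdist : p * (j + q) = p * j + p * q := Nat.mul_add p j q
    have hpn : p * n = p * (j + q) := by rw [← hq]
    have h1 : p * (∑ t, a t) = p * q := by omega
    have := Nat.eq_of_mul_eq_mul_left (by omega : 0 < p) h1
    omega
  have h1 := valMult (p := p) m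
  rw [hmsum] at h1
  have h2 := valMult (p := p) a
  rw [hasum] at h2
  have h3 : ∀ t ∈ Finset.univ (α := Fin k), padicValNat p (Nat.factorial (m t)) =
      a t + padicValNat p (Nat.factorial (a t)) := by
    intro t _
    rw [hm t]
    exact valFact_mul_add (hr t)
  have h4 : ∑ t, padicValNat p (Nat.factorial (m t)) =
      (n - j) + ∑ t, padicValNat p (Nat.factorial (a t)) := by
    rw [Finset.sum_congr rfl h3, Finset.sum_add_distrib, hasum]
  have h5 := valDesc (p := p) hj
  have h6 := valFact_mul_add (p := p) (n := n) hd
  omega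

lemma sum_product_snd {α β γ : Type*} [DecidableEq α] [DecidableEq β] [AddCommMonoid γ]
    (R : Finset α) (T : Finset β) (f : β → γ) :
    ∑ x ∈ R ×ˢ T, f x.2 = R.card • ∑ a ∈ T, f a := by
  rw [Finset.sum_product]
  simp [Finset.sum_const]

lemma Tpk_base (k : ℕ) (hk : 1 ≤ k) (n d : ℕ) (hd : d < p) :
    Tpk p k (p * n + d) =
      ∑ j ∈ Finset.range k, C ((cpk p k ((p * j + d : ℕ) : ℤ)) : ℤ) * Tpki p k j n := by
  classical
  have hp1 : 1 < p := hfp.out.one_lt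
  rw [← Finset.sum_filter_of_ne (p := fun j => j ≤ n)
    (fun j _ hne => by
      by_contra hgt
      push_neg at hgt
      exact hne (by rw [Tpki, if_pos (by omega : n < j), mul_zero]))]
  have hterm : ∀ j ∈ (Finset.range k).filter (· ≤ n),
      C ((cpk p k ((p * j + d : ℕ) : ℤ)) : ℤ) * Tpki p k j n =
      ∑ x ∈ ((Fintype.piFinset fun _ : Fin k => Finset.range p).filter
          fun r => (∑ t, r t) = p * j + d) ×ˢ Finset.Nat.antidiagonalTuple k (n - j),
        X ^ (padicValNat p (n.descFactorial j) + j +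
          padicValNat p (Nat.multinomial Finset.univ x.2)) := by
    intro j hjmem
    have hj : j ≤ n := (Finset.mem_filter.1 hjmem).2
    rw [Tpki, if_neg (by omega), cpk_natCast, Tpk_eq,
      sum_product_snd _ _ (fun a => X ^ (padicValNat p (n.descFactorial j) + j +
        padicValNat p (Nat.multinomial Finset.univ a)))]
    rw [nsmul_eq_mul, Polynomial.C_eq_natCast]
    congr 1
    rw [Finset.mul_sum]
    apply Finset.sum_congr rfl
    intro a _
    rw [← pow_add]
  rw [Finset.sum_congr rfl hterm, Finset.sum_sigma']
  rw [Tpk_eq]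
  apply Finset.sum_nbij'
    (i := fun m => (⟨n - ∑ t, m t / p, (fun t => m t % p, fun t => m t / p)⟩ :
      Σ _j : ℕ, (Fin k → ℕ) × (Fin k → ℕ)))
    (j := fun x => fun t => p * x.2.2 t + x.2.1 t)
  · intro m hm
    rw [Finset.Nat.mem_antidiagonalTuple] at hm
    obtain ⟨hAn, hjk, hSj⟩ := decomp_facts hk hd m hm
    have hsplit : ∑ t, m t = p * (∑ t, m t / p) + ∑ t, m t % p := by
      rw [Finset.mul_sum, ← Finset.sum_add_distrib]
      exact Finset.sum_congr rfl fun t _ => (Nat.div_add_mod (m t) p).symm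
    simp only [Finset.mem_sigma, Finset.mem_filter, Finset.mem_range, Finset.mem_product,
      Fintype.mem_piFinset, Finset.Nat.mem_antidiagonalTuple]
    exact ⟨⟨hjk, by omega⟩, ⟨fun t => Nat.mod_lt _ (by omega), hSj⟩, by omega⟩
  · intro x hx
    simp only [Finset.mem_sigma, Finset.mem_filter, Finset.mem_range, Finset.mem_product,
      Fintype.mem_piFinset, Finset.Nat.mem_antidiagonalTuple] at hx
    obtain ⟨⟨hjk, hjn⟩, ⟨hrp, hrsum⟩, hasum⟩ := hx
    rw [Finset.Nat.mem_antidiagonalTuple]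
    have h1 : ∑ t, (p * x.2.2 t + x.2.1 t) = p * (∑ t, x.2.2 t) + ∑ t, x.2.1 t := by
      rw [Finset.mul_sum, ← Finset.sum_add_distrib]
    have h3 : p * (n - x.1) + p * x.1 = p * n := by
      rw [← Nat.mul_add]
      congr 1
      omega
    rw [h1, hasum, hrsum]
    omega
  · intro m _
    funext t
    exact Nat.div_add_mod (m t) p
  · intro x hx
    simp only [Finset.mem_sigma, Finset.mem_filter, Finset.mem_range, Finset.mem_product,
      Fintype.mem_piFinset, Finset.Nat.mem_antidiagonalTuple] at hx
    obtain ⟨⟨hjk, hjn⟩, ⟨hrp, hrsum⟩, hasum⟩ := hx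
    obtain ⟨j, r, a⟩ := x
    simp only at hjn hrp hrsum hasum ⊢
    have hdiv' : (fun t => (p * a t + r t) / p) = a := funext fun t => by
      rw [Nat.mul_add_div (by omega), Nat.div_eq_of_lt (hrp t)]
      omega
    have hmod' : (fun t => (p * a t + r t) % p) = r := funext fun t => by
      rw [Nat.mul_add_mod, Nat.mod_eq_of_lt (hrp t)]
    simp only [hdiv', hmod']
    have hfst : n - ∑ t, a t = j := by rw [hasum]; omega
    rw [hfst]
  · intro m hm
    rw [Finset.Nat.mem_antidiagonalTuple] at hm
    obtain ⟨hAn, hjk, hSj⟩ := decomp_facts hk hd m hm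
    simp only
    congr 1
    exact val_mult_decompose hd (by omega) m (fun t => m t / p) (fun t => m t % p)
      (fun t => (Nat.div_add_mod (m t) p).symm) (fun t => Nat.mod_lt _ (by omega)) hm hSj

theorem Tpki_recurrence (p : ℕ) (hp : p.Prime) (k : ℕ) (hk : 1 ≤ k) (n d i : ℕ)
    (hd : d < p) (hi : i ≤ k - 1) :
    Tpki p k i (p * n + d) =
      ∑ j ∈ Finset.range k,
        C ((cpk p k ((p : ℤ) * j + d - i) : ℤ)) * X ^ i * Tpki p k j n := by
  haveI : Fact p.Prime := ⟨hp⟩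
  have hp1 : 1 < p := hp.one_lt
  by_cases hcase : p * n + d < i
  · rw [Tpki, if_pos hcase]
    symm
    apply Finset.sum_eq_zero
    intro j hj
    by_cases hjn : n < j
    · rw [Tpki, if_pos hjn, mul_zero]
    · push_neg at hjn
      have h1 : p * j ≤ p * n := Nat.mul_le_mul_left p hjn
      have h1' : (p : ℤ) * j ≤ (p : ℤ) * n := by exact_mod_cast h1
      have hneg : (p : ℤ) * j + d - i < 0 := by omega
      rw [cpk_neg p k hneg]
      simp
  · push_neg at hcase
    have hdM : p * (((p * n + d - i)) / p) + (p * n + d - i) % p = p * n + d - i :=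
      Nat.div_add_mod _ p
    set d' := (p * n + d - i) % p with hd'def
    set n' := (p * n + d - i) / p with hn'def
    have hd'p : d' < p := Nat.mod_lt _ (by omega)
    have hn'n : n' ≤ n := by
      have h1 : p * n + d - i ≤ p * n + d := by omega
      have h2 : n' ≤ (p * n + d) / p := Nat.div_le_div_right h1
      have h3 : (p * n + d) / p = n := by
        rw [Nat.mul_add_div (by omega : 0 < p), Nat.div_eq_of_lt hd]
        omega
      omega
    set q := n - n' with hqdef
    have hnq : n = n' + q := by omega
    have hiq : i + d' = p * q + d := by
      have h1 : p * n + d = (p * n' + d') + i := by omega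
      have h2 : p * n = p * (n' + q) := by rw [← hnq]
      have h3 : p * (n' + q) = p * n' + p * q := Nat.mul_add p n' q
      omega
    have hqk : q ≤ k := by
      by_contra hc
      push_neg at hc
      have h1 : p * (k + 1) ≤ p * q := Nat.mul_le_mul_left p hc
      have h2 : p * (k + 1) = p * k + p := by ring
      have h3 : k ≤ p * k := Nat.le_mul_of_pos_left k (by omega)
      omega
    -- rewrite LHS
    rw [Tpki, if_neg (by omega),
      show p * n + d - i = p * n' + d' from by omega,
      Tpk_base k hk n' d' hd'p, Finset.mul_sum]
    -- termwise identity
    have key : ∀ j' ∈ Finset.range k,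
        X ^ (padicValNat p ((p * n + d).descFactorial i) + i) *
          (C ((cpk p k ((p * j' + d' : ℕ) : ℤ)) : ℤ) * Tpki p k j' n') =
        C ((cpk p k ((p : ℤ) * (q + j' : ℕ) + d - i) : ℤ)) * X ^ i * Tpki p k (q + j') n := by
      intro j' _
      have hiqz : (i : ℤ) + d' = p * q + d := by exact_mod_cast hiq
      have hpqz : ((p * q : ℕ) : ℤ) = (p : ℤ) * q := by push_cast; ring
      have hcast : (p : ℤ) * ((q + j' : ℕ) : ℤ) + d - i = ((p * j' + d' : ℕ) : ℤ) := by
        push_cast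
        push_cast at hiqz
        have : (p : ℤ) * ((q : ℤ) + j') = (p : ℤ) * q + (p : ℤ) * j' := by ring
        omega
      rw [hcast]
      rw [mul_left_comm, mul_assoc (C _)]
      congr 1
      -- X ^ E * Tpki p k j' n' = X ^ i * Tpki p k (q + j') n
      by_cases hj' : n' < j'
      · rw [Tpki, if_pos hj', Tpki, if_pos (by omega : n < q + j'), mul_zero, mul_zero]
      · push_neg at hj'
        rw [Tpki, if_neg (by omega), Tpki, if_neg (by omega : ¬ n < q + j')]
        have hargs : n - (q + j') = n' - j' := by omega
        rw [hargs, ← mul_assoc, ← mul_assoc, ← pow_add, ← pow_add]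
        congr 2
        have hA1 := valDesc (p := p) (n := p * n + d) (j := i) (by omega)
        rw [show p * n + d - i = p * n' + d' from by omega] at hA1
        have hA2 := valFact_mul_add (p := p) (n := n) hd
        have hA3 := valFact_mul_add (p := p) (n := n') hd'p
        have hA4 := valDesc (p := p) hj'
        have hA5 := valDesc (p := p) (n := n) (j := q + j') (by omega)
        rw [hargs] at hA5
        omega
    rw [Finset.sum_congr rfl key]
    -- reindex : ∑_{j' ∈ range k} g (q + j') = ∑_{j ∈ range k} g j
    symm
    have hzero : ∀ j ∈ Finset.range (q + k), j ∉ Finset.range k →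
        C ((cpk p k ((p : ℤ) * j + d - i) : ℤ)) * X ^ i * Tpki p k j n = 0 := by
      intro j hj1 hj2
      simp only [Finset.mem_range, not_lt] at hj1 hj2
      have h1 : p * k ≤ p * j := Nat.mul_le_mul_left p hj2
      have h2 : k ≤ p * k := Nat.le_mul_of_pos_left k (by omega)
      have hile : i ≤ p * j + d := by
        have h3 : p * q ≤ p * k := Nat.mul_le_mul_left p hqk
        omega
      have hcast : (p : ℤ) * j + d - i = ((p * j + d - i : ℕ) : ℤ) := by
        have h4 : (p : ℤ) * j = ((p * j : ℕ) : ℤ) := by push_cast; ring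
        omega
      have hbig : k * (p - 1) < p * j + d - i := by
        have h5 : k * (p - 1) + k = k * p := by
          cases p with
          | zero => omega
          | succ p' => simp [Nat.mul_succ]
        have h6 : k * p = p * k := Nat.mul_comm k p
        omega
      rw [hcast, cpk_big p k (by omega) hbig]
      simp
    rw [Finset.sum_subset (Finset.range_subset_range.2 (by omega : k ≤ q + k)) hzero]
    rw [Finset.sum_range_add]
    have hzero2 : ∑ j ∈ Finset.range q,
        C ((cpk p k ((p : ℤ) * j + d - i) : ℤ)) * X ^ i * Tpki p k j n = 0 := by
      apply Finset.sum_eq_zero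
      intro j hj
      rw [Finset.mem_range] at hj
      have h1 : p * (j + 1) ≤ p * q := Nat.mul_le_mul_left p hj
      have h2 : p * (j + 1) = p * j + p := by ring
      have h1' : (p : ℤ) * (j + 1) ≤ (p : ℤ) * q := by exact_mod_cast h1
      have hiqz : (i : ℤ) + d' = p * q + d := by exact_mod_cast hiq
      have hneg : (p : ℤ) * j + d - i < 0 := by
        have : (p : ℤ) * (j + 1) = (p : ℤ) * j + p := by ring
        omega
      rw [cpk_neg p k hneg]
      simp
    rw [hzero2, zero_add]
end
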